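/- arXiv:2605.04053 — 3 statements merged into one kernel-verified Lean document; each statement's English description precedes it below -/
import Mathlib

section
/- Let R_1, …, R_m be rings. Then: (1) the direct product R_1 × ⋯ × R_m is a strongly right C4*-ring if and only if each R_i is a strongly right C4*-ring; (2) the direct product R_1 × ⋯ × R_m is a strongly left C4*-ring if and only if each R_i is a strongly left C4*-ring. -/
open MulOpposite

section C4Defs

/-- A submodule is a direct summand if it has a complement. -/
def IsDirectSummand {R M : Type*} [Ring R] [AddCommGroup M] [Module R M]
    (A : Submodule R M) : Prop :=
  ∃ B : Submodule R M, IsCompl A B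

/-- `M` is a `C4`-module over `R`: for every internal direct sum decomposition `M = A ⊕ B`
and every homomorphism `f : A → B` whose kernel is a direct summand of `A`, the image of `f`
is a direct summand of `B`. -/
def IsC4Module (R M : Type*) [Ring R] [AddCommGroup M] [Module R M] : Prop :=
  ∀ A B : Submodule R M, IsCompl A B → ∀ f : A →ₗ[R] B,
    IsDirectSummand (LinearMap.ker f) → IsDirectSummand (LinearMap.range f)

/-- `M` is a `C4*`-module: every submodule of `M` is a `C4`-module. -/
def IsC4StarModule (R M : Type*) [Ring R] [AddCommGroup M] [Module R M] : Prop :=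
  ∀ N : Submodule R M, IsC4Module R N

/-- `M` is square-free: no nonzero submodules `A`, `B` with `A ⊓ B = ⊥` and `A ≅ B`. -/
def IsSquareFreeModule (R M : Type*) [Ring R] [AddCommGroup M] [Module R M] : Prop :=
  ∀ A B : Submodule R M, A ≠ ⊥ → B ≠ ⊥ → A ⊓ B = ⊥ → IsEmpty (A ≃ₗ[R] B)

/-- `M` is summand-square-free: no nonzero direct summands `A`, `B` with `A ⊓ B = ⊥`
and `A ≅ B`. -/
def IsSummandSquareFree (R M : Type*) [Ring R] [AddCommGroup M] [Module R M] : Prop :=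
  ∀ A B : Submodule R M, IsDirectSummand A → IsDirectSummand B →
    A ≠ ⊥ → B ≠ ⊥ → A ⊓ B = ⊥ → IsEmpty (A ≃ₗ[R] B)

/-- `X` is an essential submodule of `A`. -/
def IsEssentialIn {R M : Type*} [Ring R] [AddCommGroup M] [Module R M]
    (X A : Submodule R M) : Prop :=
  X ≤ A ∧ ∀ N : Submodule R M, N ≤ A → N ≠ ⊥ → X ⊓ N ≠ ⊥

/-- A triple `(X, Y, f)` where `X`, `Y` are semisimple direct summands of `M` with
`X ⊓ Y = ⊥` and `f : X ≅ Y` an isomorphism.  These are the elements of the poset `S(M)`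
from the definition of semi-weak-CS modules. -/
structure SWTriple (R M : Type*) [Ring R] [AddCommGroup M] [Module R M] where
  X : Submodule R M
  Y : Submodule R M
  semisimpleX : IsSemisimpleModule R X
  semisimpleY : IsSemisimpleModule R Y
  summandX : IsDirectSummand X
  summandY : IsDirectSummand Y
  disj : X ⊓ Y = ⊥
  f : X ≃ₗ[R] Y

/-- The extension order on the poset `S(M)` of triples: `(X₁,Y₁,f₁) ≤ (X₂,Y₂,f₂)` iff
`X₁ ≤ X₂`, `Y₁ ≤ Y₂` and `f₂` restricts to `f₁` on `X₁`. -/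
def SWTriple.Extends {R M : Type*} [Ring R] [AddCommGroup M] [Module R M]
    (t s : SWTriple R M) : Prop :=
  ∃ hX : t.X ≤ s.X, t.Y ≤ s.Y ∧
    ∀ x : t.X, (s.f ⟨x.1, hX x.2⟩ : M) = (t.f x : M)

/-- `M` is semi-weak-CS: for every chain in the poset `S(M)`, with `X` the union of the first
components and `Y` the union of the second components, there are direct summands `A`, `B`
of `M` with `X` essential in `A` and `Y` essential in `B`. -/
def IsSemiWeakCS (R M : Type*) [Ring R] [AddCommGroup M] [Module R M] : Prop :=
  ∀ C : Set (SWTriple R M), IsChain SWTriple.Extends C →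
    ∃ A B : Submodule R M, IsDirectSummand A ∧ IsDirectSummand B ∧
      IsEssentialIn (⨆ t ∈ C, t.X) A ∧ IsEssentialIn (⨆ t ∈ C, t.Y) B

/-- `M` is strongly `C4*` if it is both semi-weak-CS and `C4*`. -/
def IsStronglyC4StarModule (R M : Type*) [Ring R] [AddCommGroup M] [Module R M] : Prop :=
  IsSemiWeakCS R M ∧ IsC4StarModule R M

/-- `R` is a right `C4*`-ring: the right regular module `R_R` (i.e. `R` as a module over
`Rᵐᵒᵖ`) is a `C4*`-module. -/
def IsRightC4StarRing (R : Type*) [Ring R] : Prop := IsC4StarModule Rᵐᵒᵖ R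

/-- `R` is a left `C4*`-ring: the left regular module `_RR` is a `C4*`-module. -/
def IsLeftC4StarRing (R : Type*) [Ring R] : Prop := IsC4StarModule R R

/-- `R` is a strongly right `C4*`-ring. -/
def IsStronglyRightC4StarRing (R : Type*) [Ring R] : Prop := IsStronglyC4StarModule Rᵐᵒᵖ R

/-- `R` is a strongly left `C4*`-ring. -/
def IsStronglyLeftC4StarRing (R : Type*) [Ring R] : Prop := IsStronglyC4StarModule R R

/-- `R` is right semi-weak-CS. -/
def IsRightSemiWeakCSRing (R : Type*) [Ring R] : Prop := IsSemiWeakCS Rᵐᵒᵖ R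

/-- `R` is left semi-weak-CS. -/
def IsLeftSemiWeakCSRing (R : Type*) [Ring R] : Prop := IsSemiWeakCS R R

/-- The left square-free transfer condition `LSF`: if the right regular module `T_T` is
summand-square-free then the left regular module `_TT` is square-free. -/
def LSF (T : Type*) [Ring T] : Prop :=
  IsSummandSquareFree Tᵐᵒᵖ T → IsSquareFreeModule T T

end C4Defs

section Corner

variable {T : Type*} [Ring T]

/-- The corner `eTe = {x : T | e * x = x ∧ x * e = x}` as a non-unital subring. -/
def cornerSubring (e : T) : NonUnitalSubring T where
  carrier := {x : T | e * x = x ∧ x * e = x}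
  add_mem' := by
    rintro a b ⟨ha1, ha2⟩ ⟨hb1, hb2⟩
    exact ⟨by rw [mul_add, ha1, hb1], by rw [add_mul, ha2, hb2]⟩
  zero_mem' := ⟨mul_zero e, zero_mul e⟩
  neg_mem' := by
    rintro a ⟨ha1, ha2⟩
    exact ⟨by rw [mul_neg, ha1], by rw [neg_mul, ha2]⟩
  mul_mem' := by
    rintro a b ⟨ha1, ha2⟩ ⟨hb1, hb2⟩
    exact ⟨by rw [← mul_assoc, ha1], by rw [mul_assoc, hb2]⟩

theorem mem_cornerSubring {e x : T} :
    x ∈ cornerSubring e ↔ e * x = x ∧ x * e = x := Iff.rfl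

/-- The corner ring `eTe` associated to an idempotent `e` of `T`; its identity is `e`. -/
def Corner (e : T) (he : IsIdempotentElem e) : Type _ := ↥(cornerSubring e)

instance {e : T} {he : IsIdempotentElem e} : Ring (Corner e he) :=
  { (inferInstance : NonUnitalRing ↥(cornerSubring e)) with
    one := ⟨e, he, he⟩
    one_mul := fun x => Subtype.ext (mem_cornerSubring.mp x.2).1
    mul_one := fun x => Subtype.ext (mem_cornerSubring.mp x.2).2 }

/-- `eT = {x : T | e * x = x}` as an additive subgroup; it is a left module over the
corner ring `eTe`. -/
def leftPart (e : T) : AddSubgroup T where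
  carrier := {x : T | e * x = x}
  add_mem' := by
    intro a b ha hb
    simp only [Set.mem_setOf_eq] at *
    rw [mul_add, ha, hb]
  zero_mem' := mul_zero e
  neg_mem' := by
    intro a ha
    simp only [Set.mem_setOf_eq] at *
    rw [mul_neg, ha]

/-- `Te = {x : T | x * e = x}` as an additive subgroup; it is a right module over the
corner ring `eTe`. -/
def rightPart (e : T) : AddSubgroup T where
  carrier := {x : T | x * e = x}
  add_mem' := by
    intro a b ha hb
    simp only [Set.mem_setOf_eq] at *
    rw [add_mul, ha, hb]
  zero_mem' := zero_mul e
  neg_mem' := by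
    intro a ha
    simp only [Set.mem_setOf_eq] at *
    rw [neg_mul, ha]

theorem mem_leftPart {e x : T} : x ∈ leftPart e ↔ e * x = x := Iff.rfl

theorem mem_rightPart {e x : T} : x ∈ rightPart e ↔ x * e = x := Iff.rfl

/-- `eT` is a (unital) left module over the corner ring `eTe`. -/
instance {e : T} {he : IsIdempotentElem e} : Module (Corner e he) ↥(leftPart e) where
  smul c x := ⟨c.1 * x.1, by
    have h1 : e * c.1 = c.1 := (mem_cornerSubring.mp c.2).1
    show e * (c.1 * x.1) = c.1 * x.1
    rw [← mul_assoc, h1]⟩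
  one_smul x := Subtype.ext (by
    show e * x.1 = x.1
    exact mem_leftPart.mp x.2)
  mul_smul a b x := Subtype.ext (by
    show (a.1 * b.1) * x.1 = a.1 * (b.1 * x.1)
    rw [mul_assoc])
  smul_zero a := Subtype.ext (by
    show a.1 * 0 = 0
    exact mul_zero _)
  smul_add a x y := Subtype.ext (by
    show a.1 * (x.1 + y.1) = a.1 * x.1 + a.1 * y.1
    exact mul_add _ _ _)
  add_smul a b x := Subtype.ext (by
    show (a.1 + b.1) * x.1 = a.1 * x.1 + b.1 * x.1
    exact add_mul _ _ _)
  zero_smul x := Subtype.ext (by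
    show (0 : T) * x.1 = 0
    exact zero_mul _)

/-- `Te` is a (unital) right module over the corner ring `eTe`, i.e. a module over
`(eTe)ᵐᵒᵖ`. -/
instance {e : T} {he : IsIdempotentElem e} : Module (Corner e he)ᵐᵒᵖ ↥(rightPart e) where
  smul c x := ⟨x.1 * (unop c).1, by
    have h2 : (unop c).1 * e = (unop c).1 := (mem_cornerSubring.mp (unop c).2).2
    show (x.1 * (unop c).1) * e = x.1 * (unop c).1
    rw [mul_assoc, h2]⟩
  one_smul x := Subtype.ext (by
    show x.1 * e = x.1
    exact mem_rightPart.mp x.2)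
  mul_smul a b x := Subtype.ext (by
    show x.1 * ((unop b).1 * (unop a).1) = (x.1 * (unop b).1) * (unop a).1
    rw [mul_assoc])
  smul_zero a := Subtype.ext (by
    show (0 : T) * (unop a).1 = 0
    exact zero_mul _)
  smul_add a x y := Subtype.ext (by
    show (x.1 + y.1) * (unop a).1 = x.1 * (unop a).1 + y.1 * (unop a).1
    exact add_mul _ _ _)
  add_smul a b x := Subtype.ext (by
    show x.1 * ((unop a).1 + (unop b).1) = x.1 * (unop a).1 + x.1 * (unop b).1
    exact mul_add _ _ _)
  zero_smul x := Subtype.ext (by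
    show x.1 * (0 : T) = 0
    exact mul_zero _)

/-- The hereditary side-transfer condition `HST`: for every idempotent `e` of `T`, if the
module `eT`/`Te` is summand-square-free as a right `eTe`-module (formalized on the carrier
`Te = rightPart e`, which carries the unital right `eTe`-action; at `e = 1` this is the right
regular module `T_T`), then the left `eTe`-module (carrier `eT = leftPart e`, carrying the
unital left `eTe`-action; at `e = 1` this is the left regular module `_TT`) is square-free. -/
def HST (T : Type*) [Ring T] : Prop :=
  ∀ (e : T) (he : IsIdempotentElem e),
    IsSummandSquareFree (Corner e he)ᵐᵒᵖ ↥(rightPart e) →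
      IsSquareFreeModule (Corner e he) ↥(leftPart e)

/-- The corner-stability axiom `CSA`: for every idempotent `e` of `T`, the left regular
module of the corner ring `eTe` is semi-weak-CS. -/
def CSA' (T : Type*) [Ring T] : Prop :=
  ∀ (e : T) (he : IsIdempotentElem e),
    IsSemiWeakCS (Corner e he) (Corner e he)

end Corner

section SymmetryDatum

/-- A right-to-left symmetry datum on `R`: a ring decomposition `R ≅ S × T` where `S` is
semisimple artinian, the right regular module `T_T` is summand-square-free, the two ideals
`S`, `T` are orthogonal as right `R`-modules (no nonzero isomorphic right `R`-submodules),
and `T` satisfies `HST` and `CSA`. -/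
structure RightToLeftSymmetryDatum (R S T : Type*) [Ring R] [Ring S] [Ring T] where
  iso : R ≃+* S × T
  semisimpleArtinian : IsSemisimpleRing S
  ssf : IsSummandSquareFree Tᵐᵒᵖ T
  orthogonal : ∀ A B : Submodule Rᵐᵒᵖ R,
    (∀ a ∈ A, (iso a).2 = 0) → (∀ b ∈ B, (iso b).1 = 0) →
    A ≠ ⊥ → B ≠ ⊥ → IsEmpty (A ≃ₗ[Rᵐᵒᵖ] B)
  hst : HST T
  csa : CSA' T

end SymmetryDatum

section Beta

variable (R : Type*) [Ring R]

/-- The right annihilator `r_R(P) = {s : R | P s = 0}` of a right submodule `P` of `R`. -/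
def rightAnnSet (P : Submodule Rᵐᵒᵖ R) : Set R := {s : R | ∀ p ∈ P, p * s = 0}

/-- The annihilator-bidual `β_r(P) = ℓ_R(r_R(P))`, as a right ideal of `R`. -/
def betaR (P : Submodule Rᵐᵒᵖ R) : Submodule Rᵐᵒᵖ R where
  carrier := {r : R | ∀ s ∈ rightAnnSet R P, r * s = 0}
  add_mem' := by
    intro a b ha hb
    intro s hs
    rw [add_mul, ha s hs, hb s hs, add_zero]
  zero_mem' := by
    intro s hs
    exact zero_mul s
  smul_mem' := by
    intro c x hx s hs
    show (x * unop c) * s = 0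
    rw [mul_assoc]
    refine hx _ ?_
    intro p hp
    rw [← mul_assoc]
    exact hs (p * unop c) (Submodule.smul_mem P c hp)

/-- A right ideal is a two-sided ideal which is a ring direct summand of `R` iff it is of
the form `cR` for a central idempotent `c`. -/
def IsRingDirectSummandIdeal {R : Type*} [Ring R] (I : Submodule Rᵐᵒᵖ R) : Prop :=
  ∃ c : R, IsIdempotentElem c ∧ (∀ r : R, c * r = r * c) ∧ (∀ x : R, x ∈ I ↔ c * x = x)

/-- `R` has right semisimple annihilator asymmetry. -/
def HasRightSemisimpleAnnihilatorAsymmetry (R : Type*) [Ring R] : Prop :=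
  ∃ P : Submodule Rᵐᵒᵖ R, IsSemisimpleModule Rᵐᵒᵖ P ∧ IsDirectSummand P ∧
    (¬ IsSemisimpleModule Rᵐᵒᵖ (betaR R P) ∨
     (IsSemisimpleModule Rᵐᵒᵖ (betaR R P) ∧ ¬ IsRingDirectSummandIdeal (betaR R P)) ∨
     ¬ IsEssentialIn P (betaR R P))

end Beta

/-!
Over `R = ∏ Rᵢ` the elements `eᵢ = Pi.single i 1` are central orthogonal idempotents with sum
`1`, so every `R`-module splits as `V = ⊕ eᵢV` and every submodule `N` as `⊕ (N ⊓ eᵢV)`. Thus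
`N ↦ (N ⊓ eᵢV)ᵢ` is an isomorphism from the submodule lattice of `V` onto the product of those of
the `eᵢV`. Under it direct summands, essential extensions, semisimple summands and chains of
semi-weak-CS triples correspond componentwise, and an `R`-linear map between complementary
summands acts one component at a time; hence `V` is strongly `C4*` iff every `eᵢV` is. Finally
`eᵢ(∏ Mⱼ)` over `R` is `Mᵢ` over `Rᵢ`, and a right `∏ Rᵢ`-module is a left `∏ Rᵢᵐᵒᵖ`-module.
-/

section SubmoduleLattice

variable {R S M N : Type*} [Ring R] [Ring S] [AddCommGroup M] [AddCommGroup N]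
  [Module R M] [Module S N]

theorem OrderIso.isDirectSummand_iff (φ : Submodule R M ≃o Submodule S N) {A : Submodule R M} :
    IsDirectSummand (φ A) ↔ IsDirectSummand A := by
  refine ⟨fun ⟨B, h⟩ => ⟨φ.symm B, ?_⟩, fun ⟨B, h⟩ => ⟨φ B, φ.isCompl_iff.mp h⟩⟩
  simpa using φ.symm.isCompl_iff.mp h

theorem IsEssentialIn.orderIso {X A : Submodule R M} (h : IsEssentialIn X A)
    (φ : Submodule R M ≃o Submodule S N) : IsEssentialIn (φ X) (φ A) := by
  refine ⟨φ.monotone h.1, fun P hP hP0 hXP => ?_⟩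
  refine h.2 (φ.symm P) (φ.symm_apply_le.mpr hP) (by simpa using hP0) ?_
  simpa [← φ.symm.map_inf] using congrArg φ.symm hXP

theorem OrderIso.isEssentialIn_iff (φ : Submodule R M ≃o Submodule S N)
    {X A : Submodule R M} : IsEssentialIn (φ X) (φ A) ↔ IsEssentialIn X A :=
  ⟨fun h => by simpa using h.orderIso φ.symm, fun h => h.orderIso φ⟩

theorem OrderIso.isSemisimpleModule_iff (φ : Submodule R M ≃o Submodule S N) :
    IsSemisimpleModule R M ↔ IsSemisimpleModule S N := by
  rw [_root_.isSemisimpleModule_iff, _root_.isSemisimpleModule_iff, φ.complementedLattice_iff]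

end SubmoduleLattice

section Submodule

variable {R M : Type*} [Ring R] [AddCommGroup M] [Module R M]

theorem IsDirectSummand.map_subtype {N : Submodule R M} (hN : IsDirectSummand N)
    {X : Submodule R N} (hX : IsDirectSummand X) : IsDirectSummand (X.map N.subtype) := by
  obtain ⟨K, hK⟩ := hN
  obtain ⟨L, hL⟩ := hX
  let p : M →ₗ[R] X.map N.subtype := (X.equivMapOfInjective _ N.injective_subtype).toLinearMap ∘ₗ
    X.projectionOnto L hL ∘ₗ N.projectionOnto K hK
  refine ⟨_, LinearMap.isCompl_of_proj (f := p) ?_⟩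
  rintro ⟨_, x, hx, rfl⟩
  ext
  simp [p, Submodule.projectionOnto_apply_left hK x,
    Submodule.projectionOnto_apply_left hL ⟨x, hx⟩]

theorem IsEssentialIn.comap_subtype {N : Submodule R M} {X : Submodule R N} {A : Submodule R M}
    (h : IsEssentialIn (X.map N.subtype) A) : IsEssentialIn X (A.comap N.subtype) := by
  refine ⟨fun x hx => h.1 ⟨x, hx, rfl⟩, fun P hP hP0 hXP => ?_⟩
  refine h.2 (P.map N.subtype) (Submodule.map_le_iff_le_comap.mpr hP) ?_ ?_
  · rw [ne_eq, ← Submodule.map_bot N.subtype,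
      (Submodule.map_injective_of_injective N.injective_subtype).eq_iff]
    exact hP0
  · rw [← Submodule.map_inf _ N.injective_subtype, hXP, Submodule.map_bot]

end Submodule

section Transport

variable {R M N : Type*} [Ring R] [AddCommGroup M] [Module R M] [AddCommGroup N] [Module R N]

theorem IsC4Module.isDirectSummand_range (h : IsC4Module R M) {A B : Submodule R M}
    (hAB : IsCompl A B) {A' B' : Type*} [AddCommGroup A'] [Module R A'] [AddCommGroup B']
    [Module R B'] (eA : A' ≃ₗ[R] A) (eB : B' ≃ₗ[R] B) {f : A' →ₗ[R] B'}
    (hf : IsDirectSummand (LinearMap.ker f)) : IsDirectSummand (LinearMap.range f) := by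
  let g : A →ₗ[R] B := eB.toLinearMap ∘ₗ f ∘ₗ eA.symm.toLinearMap
  have hker : LinearMap.ker g = Submodule.orderIsoMapComap eA (LinearMap.ker f) := by
    rw [LinearEquiv.ker_comp, LinearMap.ker_comp, Submodule.comap_equiv_eq_map_symm]
    rfl
  have hrange : LinearMap.range g = Submodule.orderIsoMapComap eB (LinearMap.range f) := by
    rw [LinearMap.range_comp, LinearEquiv.range_comp]
    rfl
  have := h A B hAB g (hker ▸ (OrderIso.isDirectSummand_iff _).mpr hf)
  rwa [hrange, OrderIso.isDirectSummand_iff] at this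

theorem IsC4Module.of_linearEquiv (h : IsC4Module R M) (e : M ≃ₗ[R] N) : IsC4Module R N :=
  fun A B hAB _ hf => h.isDirectSummand_range
    ((Submodule.orderIsoMapComap e.symm).isCompl_iff.mp hAB)
    (e.symm.submoduleMap A) (e.symm.submoduleMap B) hf

theorem IsC4StarModule.submodule (h : IsC4StarModule R M) (N : Submodule R M) :
    IsC4StarModule R N :=
  fun P => (h (P.map N.subtype)).of_linearEquiv (P.equivMapOfInjective _ N.injective_subtype).symm

theorem IsSemiWeakCS.of_triple_map {S N : Type*} [Ring S] [AddCommGroup N] [Module S N]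
    (h : IsSemiWeakCS R M) (F : SWTriple S N → SWTriple R M)
    (hF : ∀ ⦃t s⦄, t.Extends s → (F t).Extends (F s))
    {φ : Submodule S N → Submodule R M} {ψ : Submodule R M → Submodule S N}
    (gc : GaloisConnection φ ψ) (hFX : ∀ t, (F t).X = φ t.X) (hFY : ∀ t, (F t).Y = φ t.Y)
    (hψ : ∀ A, IsDirectSummand A → IsDirectSummand (ψ A))
    (hess : ∀ X A, IsEssentialIn (φ X) A → IsEssentialIn X (ψ A)) : IsSemiWeakCS S N := by
  intro C hC
  obtain ⟨A, B, hA, hB, hXA, hYB⟩ := h (F '' C) (hC.image_of_map_rel _ _ F hF)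
  simp only [iSup_image, hFX, hFY, ← gc.l_iSup] at hXA hYB
  exact ⟨ψ A, ψ B, hψ A hA, hψ B hB, hess _ _ hXA, hess _ _ hYB⟩

noncomputable def SWTriple.mapSubtype {N : Submodule R M} (hN : IsDirectSummand N)
    (t : SWTriple R N) : SWTriple R M where
  X := t.X.map N.subtype
  Y := t.Y.map N.subtype
  semisimpleX := have := t.semisimpleX; .congr (t.X.equivMapOfInjective _ N.injective_subtype).symm
  semisimpleY := have := t.semisimpleY; .congr (t.Y.equivMapOfInjective _ N.injective_subtype).symm
  summandX := hN.map_subtype t.summandX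
  summandY := hN.map_subtype t.summandY
  disj := by rw [← Submodule.map_inf _ N.injective_subtype, t.disj, Submodule.map_bot]
  f := (t.X.equivMapOfInjective _ N.injective_subtype).symm ≪≫ₗ t.f ≪≫ₗ
    t.Y.equivMapOfInjective _ N.injective_subtype

theorem SWTriple.mapSubtype_extends {N : Submodule R M} (hN : IsDirectSummand N)
    {t s : SWTriple R N} (h : t.Extends s) : (t.mapSubtype hN).Extends (s.mapSubtype hN) := by
  obtain ⟨hX, hY, hf⟩ := h
  refine ⟨Submodule.map_mono hX, Submodule.map_mono hY, ?_⟩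
  rintro ⟨_, x, hx, rfl⟩
  have hsymm : ∀ {P : Submodule R N} (hP : x ∈ P),
      (P.equivMapOfInjective _ N.injective_subtype).symm ⟨N.subtype x, x, hP, rfl⟩ = ⟨x, hP⟩ :=
    fun _ => (LinearEquiv.symm_apply_eq _).mpr rfl
  change ((s.f ((s.X.equivMapOfInjective _ N.injective_subtype).symm ⟨N.subtype x, _⟩) : N) : M)
    = ((t.f ((t.X.equivMapOfInjective _ N.injective_subtype).symm ⟨N.subtype x, _⟩) : N) : M)
  rw [hsymm (hX hx), hsymm hx, ← hf ⟨x, hx⟩]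

theorem IsSemiWeakCS.submodule (h : IsSemiWeakCS R M) {N : Submodule R M}
    (hN : IsDirectSummand N)
    (hcomap : ∀ A, IsDirectSummand A → IsDirectSummand (A.comap N.subtype)) :
    IsSemiWeakCS R N :=
  h.of_triple_map (SWTriple.mapSubtype hN) (fun _ _ => SWTriple.mapSubtype_extends hN)
    (Submodule.gc_map_comap N.subtype) (fun _ => rfl) (fun _ => rfl) hcomap
    fun _ _ => IsEssentialIn.comap_subtype

end Transport

/-- `σ` and `τ` are bare maps, not ring homomorphisms (`Pi.single i : R i → ∀ j, R j` is not
unital), yet they are enough for `e` to match `R`-submodules of `M` with `S`-submodules of `N`,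
and `R`-linear maps between them with `S`-linear ones. -/
structure CompatEquiv (R S M N : Type*) [Ring R] [Ring S] [AddCommGroup M] [AddCommGroup N]
    [Module R M] [Module S N] where
  σ : R → S
  τ : S → R
  e : M ≃+ N
  map_smul : ∀ (r : R) (m : M), e (r • m) = σ r • e m
  symm_map_smul : ∀ (s : S) (n : N), e.symm (s • n) = τ s • e.symm n

namespace CompatEquiv

variable {R S M N : Type*} [Ring R] [Ring S] [AddCommGroup M] [AddCommGroup N]
  [Module R M] [Module S N] (c : CompatEquiv R S M N)

theorem map_τ_smul (s : S) (m : M) : c.e (c.τ s • m) = s • c.e m := by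
  rw [← c.e.symm_apply_apply m, ← c.symm_map_smul, AddEquiv.apply_symm_apply,
    AddEquiv.apply_symm_apply]

def symm : CompatEquiv S R N M where
  σ := c.τ
  τ := c.σ
  e := c.e.symm
  map_smul := c.symm_map_smul
  symm_map_smul r m := by simpa using c.map_smul r m

def smap (A : Submodule R M) : Submodule S N where
  carrier := c.e.symm ⁻¹' A
  add_mem' ha hb := by simp [A.add_mem ha hb]
  zero_mem' := by simp
  smul_mem' s n hn := by simp [c.symm_map_smul, A.smul_mem _ hn]

theorem mem_smap {A : Submodule R M} {n : N} : n ∈ c.smap A ↔ c.e.symm n ∈ A := Iff.rfl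

def submoduleOrderIso : Submodule R M ≃o Submodule S N :=
  Equiv.toOrderIso
    { toFun := c.smap
      invFun := c.symm.smap
      left_inv A := by ext; simp [mem_smap, symm]
      right_inv A := by ext; simp [mem_smap, symm] }
    (fun _ _ h _ hn => h hn) (fun _ _ h _ hn => h hn)

theorem submoduleOrderIso_apply (A : Submodule R M) : c.submoduleOrderIso A = c.smap A := rfl

def restrict (A : Submodule R M) : CompatEquiv R S A (c.smap A) where
  σ := c.σ
  τ := c.τ
  e :=
    { toFun x := ⟨c.e x, by simp [mem_smap]⟩
      invFun y := ⟨c.e.symm y, y.2⟩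
      left_inv x := by simp
      right_inv y := by simp
      map_add' x y := by ext; simp }
  map_smul r m := Subtype.ext (c.map_smul r m)
  symm_map_smul s n := Subtype.ext (c.symm_map_smul s n)

def conj {A B : Submodule R M} (f : A →ₗ[R] B) : c.smap A →ₗ[S] c.smap B where
  toFun y := (c.restrict B).e (f ((c.restrict A).e.symm y))
  map_add' y z := by simp
  map_smul' s y := by
    simp only [RingHom.id_apply, (c.restrict A).symm_map_smul, f.map_smul]
    exact (c.restrict B).map_τ_smul s _

theorem ker_conj {A B : Submodule R M} (f : A →ₗ[R] B) :
    LinearMap.ker (c.conj f) = (c.restrict A).smap (LinearMap.ker f) := by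
  ext y
  simp [conj, mem_smap]

theorem range_conj {A B : Submodule R M} (f : A →ₗ[R] B) :
    LinearMap.range (c.conj f) = (c.restrict B).smap (LinearMap.range f) := by
  ext y
  simp only [LinearMap.mem_range, mem_smap, conj, LinearMap.coe_mk, AddHom.coe_mk]
  constructor
  · rintro ⟨x, rfl⟩
    exact ⟨(c.restrict A).e.symm x, by simp⟩
  · rintro ⟨x, hx⟩
    exact ⟨(c.restrict A).e x, by simp [hx]⟩

theorem isC4Module (c : CompatEquiv R S M N) (h : IsC4Module R M) : IsC4Module S N := by
  intro A B hAB f hf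
  have hker : IsDirectSummand (LinearMap.ker (c.symm.conj f)) := by
    rw [ker_conj]
    exact (c.symm.restrict A).submoduleOrderIso.isDirectSummand_iff.mpr hf
  have hrange : IsDirectSummand (LinearMap.range (c.symm.conj f)) :=
    h _ _ (c.symm.submoduleOrderIso.isCompl_iff.mp hAB) _ hker
  rw [range_conj] at hrange
  exact (c.symm.restrict B).submoduleOrderIso.isDirectSummand_iff.mp hrange

def conjEquiv {A B : Submodule R M} (f : A ≃ₗ[R] B) : c.smap A ≃ₗ[S] c.smap B :=
  .ofLinearMap (c.conj f.toLinearMap) (c.conj f.symm.toLinearMap)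
    (by ext; simp [conj]) (by ext; simp [conj])

def triple (t : SWTriple R M) : SWTriple S N where
  X := c.smap t.X
  Y := c.smap t.Y
  semisimpleX := (c.restrict t.X).submoduleOrderIso.isSemisimpleModule_iff.mp t.semisimpleX
  semisimpleY := (c.restrict t.Y).submoduleOrderIso.isSemisimpleModule_iff.mp t.semisimpleY
  summandX := c.submoduleOrderIso.isDirectSummand_iff.mpr t.summandX
  summandY := c.submoduleOrderIso.isDirectSummand_iff.mpr t.summandY
  disj := by
    rw [← submoduleOrderIso_apply, ← submoduleOrderIso_apply, ← OrderIso.map_inf, t.disj,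
      OrderIso.map_bot]
  f := c.conjEquiv t.f

theorem triple_extends {t s : SWTriple R M} (h : t.Extends s) :
    (c.triple t).Extends (c.triple s) := by
  obtain ⟨hX, hY, hf⟩ := h
  refine ⟨fun _ hn => hX hn, fun _ hn => hY hn, fun x => ?_⟩
  exact congrArg c.e (hf ⟨c.e.symm x, x.2⟩)

theorem isSemiWeakCS (c : CompatEquiv R S M N) (h : IsSemiWeakCS R M) : IsSemiWeakCS S N :=
  h.of_triple_map c.symm.triple (fun _ _ => c.symm.triple_extends)
    c.symm.submoduleOrderIso.to_galoisConnection (fun _ => rfl) (fun _ => rfl)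
    (fun A hA => c.symm.submoduleOrderIso.isDirectSummand_iff.mp (by simpa using hA))
    fun X A hXA => c.symm.submoduleOrderIso.isEssentialIn_iff.mp (by simpa using hXA)

theorem isStronglyC4StarModule (c : CompatEquiv R S M N) (h : IsStronglyC4StarModule R M) :
    IsStronglyC4StarModule S N :=
  ⟨c.isSemiWeakCS h.1, fun B => (c.symm.restrict B).symm.isC4Module (h.2 _)⟩

theorem isStronglyC4StarModule_iff (c : CompatEquiv R S M N) :
    IsStronglyC4StarModule R M ↔ IsStronglyC4StarModule S N :=
  ⟨c.isStronglyC4StarModule, c.symm.isStronglyC4StarModule⟩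

end CompatEquiv

section PiComponent

variable {ι : Type*} [DecidableEq ι] {R : ι → Type*} [∀ i, Ring (R i)]
  {V : Type*} [AddCommGroup V] [Module (∀ i, R i) V]

theorem Pi.single_one_commute (i : ι) (r : ∀ j, R j) : Commute (Pi.single i 1) r := by
  rw [Commute, SemiconjBy, ← Pi.single_mul_left, ← Pi.single_mul_right, one_mul, mul_one]

theorem Pi.single_one_smul_comm (i : ι) (r : ∀ j, R j) (v : V) :
    (Pi.single i 1 : ∀ j, R j) • r • v = r • (Pi.single i 1 : ∀ j, R j) • v := by
  rw [smul_smul, smul_smul, (Pi.single_one_commute i r).eq]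

variable (R) in
def piComponent (i : ι) (V : Type*) [AddCommGroup V] [Module (∀ i, R i) V] :
    Submodule (∀ j, R j) V where
  carrier := {v | (Pi.single i 1 : ∀ j, R j) • v = v}
  add_mem' {v w} (hv : _ = v) (hw : _ = w) := by simp [smul_add, hv, hw]
  zero_mem' := smul_zero _
  smul_mem' r v (hv : _ = v) := by simp [Pi.single_one_smul_comm, hv]

theorem mem_piComponent {i : ι} {v : V} :
    v ∈ piComponent R i V ↔ (Pi.single i 1 : ∀ j, R j) • v = v := Iff.rfl

variable (R) in
def piComponentProj (i : ι) : V →ₗ[∀ j, R j] piComponent R i V where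
  toFun v := ⟨Pi.single i 1 • v, by
    rw [mem_piComponent, smul_smul, ← Pi.single_mul, one_mul]⟩
  map_add' v w := Subtype.ext (smul_add _ v w)
  map_smul' r v := Subtype.ext (Pi.single_one_smul_comm i r v)

theorem coe_piComponentProj (i : ι) (v : V) :
    (piComponentProj R i v : V) = (Pi.single i 1 : ∀ j, R j) • v := rfl

theorem piComponentProj_of_mem {i : ι} (x : piComponent R i V) :
    piComponentProj R i (x : V) = x :=
  Subtype.ext x.2

theorem piComponentProj_of_mem_of_ne {i j : ι} (hij : i ≠ j) (x : piComponent R j V) :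
    piComponentProj R i (x : V) = 0 := by
  ext
  rw [coe_piComponentProj, ← x.2, smul_smul, ← Pi.single_mul_left, Pi.single_eq_of_ne hij,
    mul_zero, Pi.single_zero, zero_smul, Submodule.coe_zero]

theorem isCompl_piComponent_ker (i : ι) :
    IsCompl (piComponent R i V) (LinearMap.ker (piComponentProj R i)) :=
  LinearMap.isCompl_of_proj piComponentProj_of_mem

def piComponentEquivComap (i : ι) (A : Submodule (∀ j, R j) V) :
    piComponent R i A ≃ₗ[∀ j, R j] A.comap (piComponent R i V).subtype where
  toFun x := ⟨⟨x.1, congrArg Subtype.val x.2⟩, x.1.2⟩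
  invFun y := ⟨⟨y.1, y.2⟩, Subtype.ext y.1.2⟩
  left_inv _ := rfl
  right_inv _ := rfl
  map_add' _ _ := rfl
  map_smul' _ _ := rfl

section Maps

variable {M N : Type*} [AddCommGroup M] [Module (∀ i, R i) M] [AddCommGroup N]
  [Module (∀ i, R i) N]

theorem piComponent_mapsTo (f : M →ₗ[∀ j, R j] N) (i : ι) :
    ∀ x ∈ piComponent R i M, f x ∈ piComponent R i N := fun x hx => by
  rw [mem_piComponent, ← map_smul, hx]

theorem map_piComponent (f : M ≃ₗ[∀ j, R j] N) (i : ι) :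
    (piComponent R i M).map (f : M →ₗ[∀ j, R j] N) = piComponent R i N :=
  le_antisymm (Submodule.map_le_iff_le_comap.mpr (piComponent_mapsTo f.toLinearMap i))
    fun y hy => ⟨f.symm y, piComponent_mapsTo f.symm.toLinearMap i y hy, by simp⟩

theorem range_restrict_piComponent (f : M →ₗ[∀ j, R j] N) (i : ι) :
    LinearMap.range (f.restrict (piComponent_mapsTo f i)) =
      (LinearMap.range f).comap (piComponent R i N).subtype := by
  ext y
  refine ⟨fun ⟨x, hx⟩ => ⟨x, congrArg Subtype.val hx⟩, fun ⟨x, hx⟩ => ?_⟩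
  refine ⟨piComponentProj R i x, Subtype.ext ?_⟩
  simp only [LinearMap.restrict_apply, coe_piComponentProj, map_smul, hx]
  exact y.2

end Maps

theorem Pi.single_one_smul_eq_single (M : ι → Type*) [∀ i, AddCommGroup (M i)]
    [∀ i, Module (R i) (M i)] (i : ι) (m : ∀ j, M j) :
    (Pi.single i 1 : ∀ j, R j) • m = Pi.single i (m i) := by
  ext j
  obtain rfl | hji := eq_or_ne j i <;> simp [*]

def piComponentCompatEquiv (M : ι → Type*) [∀ i, AddCommGroup (M i)]
    [∀ i, Module (R i) (M i)] (i : ι) :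
    CompatEquiv (∀ j, R j) (R i) (piComponent R i (∀ j, M j)) (M i) where
  σ r := r i
  τ := Pi.single i
  e :=
    { toFun x := (x : ∀ j, M j) i
      invFun a := ⟨Pi.single i a, by
        rw [mem_piComponent, Pi.single_one_smul_eq_single M, Pi.single_eq_same]⟩
      left_inv x := Subtype.ext ((Pi.single_one_smul_eq_single (R := R) M i x).symm.trans x.2)
      right_inv a := Pi.single_eq_same i a
      map_add' _ _ := rfl }
  map_smul _ _ := rfl
  symm_map_smul a m := Subtype.ext (Pi.single_smul₀ i a m)

variable [Fintype ι]

variable (R) in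
theorem sum_coe_piComponentProj (v : V) : ∑ i, (piComponentProj R i v : V) = v := by
  simp_rw [coe_piComponentProj, ← Finset.sum_smul]
  rw [(CompleteOrthogonalIdempotents.single R).complete, one_smul]

variable (R V) in
def submodulePiComponentOrderIso :
    Submodule (∀ j, R j) V ≃o ∀ i, Submodule (∀ j, R j) (piComponent R i V) :=
  Equiv.toOrderIso
    { toFun N i := N.comap (piComponent R i V).subtype
      invFun K := ⨅ i, (K i).comap (piComponentProj R i)
      left_inv N := by
        ext v
        simp only [Submodule.mem_iInf, Submodule.mem_comap, Submodule.coe_subtype]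
        refine ⟨fun h => ?_, fun hv i => N.smul_mem _ hv⟩
        rw [← sum_coe_piComponentProj R v]
        exact N.sum_mem fun i _ => h i
      right_inv K := by
        ext i x
        simp only [Submodule.mem_iInf, Submodule.mem_comap, Submodule.coe_subtype]
        refine ⟨fun h => by simpa [piComponentProj_of_mem] using h i, fun hx j => ?_⟩
        obtain rfl | hij := eq_or_ne j i
        · rwa [piComponentProj_of_mem]
        · rw [piComponentProj_of_mem_of_ne hij]
          exact (K j).zero_mem }
    (fun _ _ h _ => Submodule.comap_mono h)
    (fun _ _ h => iInf_mono fun i => Submodule.comap_mono (h i))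

theorem submodulePiComponentOrderIso_apply (N : Submodule (∀ j, R j) V) (i : ι) :
    submodulePiComponentOrderIso R V N i = N.comap (piComponent R i V).subtype := rfl

theorem comap_submodulePiComponentOrderIso_symm
    (K : ∀ i, Submodule (∀ j, R j) (piComponent R i V)) (i : ι) :
    ((submodulePiComponentOrderIso R V).symm K).comap (piComponent R i V).subtype = K i :=
  congrFun ((submodulePiComponentOrderIso R V).apply_symm_apply K) i

theorem comap_iSup_piComponent {κ : Sort*} (N : κ → Submodule (∀ j, R j) V) (i : ι) :
    (⨆ k, N k).comap (piComponent R i V).subtype =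
      ⨆ k, (N k).comap (piComponent R i V).subtype := by
  rw [← submodulePiComponentOrderIso_apply, OrderIso.map_iSup, iSup_apply]
  rfl

theorem isCompl_comap_piComponent {A B : Submodule (∀ j, R j) V} (h : IsCompl A B) (i : ι) :
    IsCompl (A.comap (piComponent R i V).subtype) (B.comap (piComponent R i V).subtype) :=
  Pi.isCompl_iff.mp ((submodulePiComponentOrderIso R V).isCompl_iff.mp h) i

theorem isDirectSummand_iff_forall_comap_piComponent {N : Submodule (∀ j, R j) V} :
    IsDirectSummand N ↔ ∀ i, IsDirectSummand (N.comap (piComponent R i V).subtype) := by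
  let Φ := submodulePiComponentOrderIso R V
  calc IsDirectSummand N ↔ ∃ K, IsCompl (Φ N) K := by
        simp only [IsDirectSummand, Φ.isCompl_iff, Φ.surjective.exists]
    _ ↔ ∃ K : ∀ i, _, ∀ i, IsCompl (Φ N i) (K i) := by simp only [Pi.isCompl_iff]
    _ ↔ _ := Classical.skolem.symm

theorem isEssentialIn_of_forall_comap_piComponent {X A : Submodule (∀ j, R j) V}
    (h : ∀ i, IsEssentialIn (X.comap (piComponent R i V).subtype)
      (A.comap (piComponent R i V).subtype)) : IsEssentialIn X A := by
  let Φ := submodulePiComponentOrderIso R V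
  refine ⟨Φ.le_iff_le.mp fun i => (h i).1, fun P hPA hP0 hXP => ?_⟩
  obtain ⟨i, hi⟩ : ∃ i, Φ P i ≠ ⊥ := by
    by_contra! hP
    exact hP0 (Φ.injective (by rw [Φ.map_bot]; exact funext hP))
  refine (h i).2 _ (Submodule.comap_mono hPA) hi ?_
  rw [← Submodule.comap_inf, hXP, Submodule.comap_bot, Submodule.ker_subtype]

theorem IsC4Module.of_piComponent (h : ∀ i, IsC4Module (∀ j, R j) (piComponent R i V)) :
    IsC4Module (∀ j, R j) V := by
  intro A B hAB f hf
  rw [isDirectSummand_iff_forall_comap_piComponent] at hf ⊢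
  intro i
  rw [← range_restrict_piComponent]
  refine (h i).isDirectSummand_range (isCompl_comap_piComponent hAB i)
    (A' := piComponent R i A) (B' := piComponent R i B) (piComponentEquivComap i A)
    (piComponentEquivComap i B) ?_
  rw [LinearMap.ker_restrict]
  exact hf i

theorem isC4StarModule_iff_piComponent :
    IsC4StarModule (∀ j, R j) V ↔ ∀ i, IsC4StarModule (∀ j, R j) (piComponent R i V) :=
  ⟨fun h _ => h.submodule _, fun h N => IsC4Module.of_piComponent fun i =>
    (h i _).of_linearEquiv (piComponentEquivComap i N).symm⟩

def SWTriple.comapPiComponent (i : ι) (t : SWTriple (∀ j, R j) V) :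
    SWTriple (∀ j, R j) (piComponent R i V) where
  X := t.X.comap (piComponent R i V).subtype
  Y := t.Y.comap (piComponent R i V).subtype
  semisimpleX := have := t.semisimpleX; .congr (piComponentEquivComap i t.X).symm
  semisimpleY := have := t.semisimpleY; .congr (piComponentEquivComap i t.Y).symm
  summandX := isDirectSummand_iff_forall_comap_piComponent.mp t.summandX i
  summandY := isDirectSummand_iff_forall_comap_piComponent.mp t.summandY i
  disj := by rw [← Submodule.comap_inf, t.disj, Submodule.comap_bot, Submodule.ker_subtype]
  f := (piComponentEquivComap i t.X).symm ≪≫ₗ t.f.ofSubmodules _ _ (map_piComponent t.f i) ≪≫ₗ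
    piComponentEquivComap i t.Y

theorem SWTriple.comapPiComponent_X (i : ι) (t : SWTriple (∀ j, R j) V) :
    (t.comapPiComponent i).X = t.X.comap (piComponent R i V).subtype := rfl

theorem SWTriple.comapPiComponent_Y (i : ι) (t : SWTriple (∀ j, R j) V) :
    (t.comapPiComponent i).Y = t.Y.comap (piComponent R i V).subtype := rfl

theorem SWTriple.comapPiComponent_extends (i : ι) {t s : SWTriple (∀ j, R j) V}
    (h : t.Extends s) : (t.comapPiComponent i).Extends (s.comapPiComponent i) := by
  obtain ⟨hX, hY, hf⟩ := h
  exact ⟨Submodule.comap_mono hX, Submodule.comap_mono hY, fun x => Subtype.ext (hf ⟨x.1, x.2⟩)⟩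

theorem IsSemiWeakCS.of_piComponent (h : ∀ i, IsSemiWeakCS (∀ j, R j) (piComponent R i V)) :
    IsSemiWeakCS (∀ j, R j) V := by
  intro C hC
  choose A B hA hB hXA hYB using fun i => h i _ (hC.image_of_map_rel _ _
    (SWTriple.comapPiComponent i) fun _ _ => SWTriple.comapPiComponent_extends i)
  simp only [iSup_image, SWTriple.comapPiComponent_X, SWTriple.comapPiComponent_Y,
    ← comap_iSup_piComponent] at hXA hYB
  let Φ := submodulePiComponentOrderIso R V
  refine ⟨Φ.symm A, Φ.symm B, isDirectSummand_iff_forall_comap_piComponent.mpr fun i => ?_,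
    isDirectSummand_iff_forall_comap_piComponent.mpr fun i => ?_,
    isEssentialIn_of_forall_comap_piComponent fun i => ?_,
    isEssentialIn_of_forall_comap_piComponent fun i => ?_⟩ <;>
  rw [comap_submodulePiComponentOrderIso_symm]
  exacts [hA i, hB i, hXA i, hYB i]

theorem isStronglyC4StarModule_iff_piComponent :
    IsStronglyC4StarModule (∀ j, R j) V ↔
      ∀ i, IsStronglyC4StarModule (∀ j, R j) (piComponent R i V) := by
  refine ⟨fun h i => ⟨?_, isC4StarModule_iff_piComponent.mp h.2 i⟩, fun h =>
    ⟨IsSemiWeakCS.of_piComponent fun i => (h i).1,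
      isC4StarModule_iff_piComponent.mpr fun i => (h i).2⟩⟩
  exact h.1.submodule ⟨_, isCompl_piComponent_ker i⟩ fun A hA =>
    isDirectSummand_iff_forall_comap_piComponent.mp hA i

theorem isStronglyC4StarModule_pi_iff (M : ι → Type*) [∀ i, AddCommGroup (M i)]
    [∀ i, Module (R i) (M i)] :
    IsStronglyC4StarModule (∀ i, R i) (∀ i, M i) ↔ ∀ i, IsStronglyC4StarModule (R i) (M i) :=
  isStronglyC4StarModule_iff_piComponent.trans <|
    forall_congr' fun i => (piComponentCompatEquiv M i).isStronglyC4StarModule_iff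

end PiComponent

def piOpCompatEquiv {ι : Type*} (R : ι → Type*) [∀ i, Ring (R i)] :
    CompatEquiv (∀ i, R i)ᵐᵒᵖ (∀ i, (R i)ᵐᵒᵖ) (∀ i, R i) (∀ i, R i) where
  σ r i := op (unop r i)
  τ r := op fun i => unop (r i)
  e := AddEquiv.refl _
  map_smul _ _ := rfl
  symm_map_smul _ _ := rfl

/-- A finite direct product of rings is a strongly right (resp. left)
`C4*`-ring if and only if each factor is. -/
theorem finite_product_permanence (m : ℕ) (Rs : Fin m → Type*) [∀ i, Ring (Rs i)] :
    (IsStronglyRightC4StarRing (∀ i, Rs i) ↔ ∀ i, IsStronglyRightC4StarRing (Rs i)) ∧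
    (IsStronglyLeftC4StarRing (∀ i, Rs i) ↔ ∀ i, IsStronglyLeftC4StarRing (Rs i)) :=
  ⟨(piOpCompatEquiv Rs).isStronglyC4StarModule_iff.trans
      (isStronglyC4StarModule_pi_iff (R := fun i => (Rs i)ᵐᵒᵖ) Rs),
    isStronglyC4StarModule_pi_iff Rs⟩
end

section
/- There exists a ring R such that R is a left C4*-ring but R is not a right C4*-ring. -/
open MulOpposite

/-! In `K[x;σ]` the degree is additive, so it is a domain, and counting dimensions of the left
`K`-spaces of polynomials of bounded degree shows that any two nonzero left ideals meet. A module
with this property has no nontrivial direct sum decompositions, so it is trivially `C4*`.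

On the right, if `t ∉ σ(K)` then `xR ∩ txR = 0`, as one sees by comparing coefficients in
`x r = t x s`. In `N = xR ⊕ txR`, left multiplication by `tx` is a monomorphism `xR → txR`, and
under `txR ≅ R` its image corresponds to `xR`, which is not a direct summand of `R_R` because a
domain has no idempotents besides `0` and `1`. The Frobenius of `𝔽₂(X)` with `t = X` is a
witness. -/

open scoped Polynomial

section Module
variable {R M N : Type*} [Ring R] [AddCommGroup M] [Module R M] [AddCommGroup N] [Module R N]

theorem isDirectSummand_bot : IsDirectSummand (⊥ : Submodule R M) := ⟨⊤, isCompl_bot_top⟩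

theorem isDirectSummand_map_equiv_iff (e : M ≃ₗ[R] N) {S : Submodule R M} :
    IsDirectSummand (S.map e.toLinearMap) ↔ IsDirectSummand S := by
  let f := Submodule.orderIsoMapComap e
  constructor
  · rintro ⟨T, hT⟩
    obtain ⟨T, rfl⟩ := f.surjective T
    exact ⟨T, f.isCompl_iff.mpr hT⟩
  · rintro ⟨T, hT⟩
    exact ⟨f T, f.isCompl_iff.mp hT⟩

theorem Submodule.isCompl_comap_subtype_sup {P Q : Submodule R M} (hPQ : Disjoint P Q) :
    IsCompl (P.comap (P ⊔ Q).subtype) (Q.comap (P ⊔ Q).subtype) := by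
  have map_subtype_injective := Submodule.map_injective_of_injective (P ⊔ Q).injective_subtype
  refine .of_eq (map_subtype_injective ?_) (map_subtype_injective ?_)
  · rw [Submodule.map_inf _ (P ⊔ Q).injective_subtype, Submodule.map_comap_subtype,
      Submodule.map_comap_subtype, ← inf_inf_distrib_left, hPQ.eq_bot, inf_bot_eq,
      Submodule.map_bot]
  · rw [Submodule.map_sup, Submodule.map_comap_subtype, Submodule.map_comap_subtype,
      Submodule.map_top, Submodule.range_subtype, inf_of_le_right le_sup_left,
      inf_of_le_right le_sup_right]

theorem IsC4StarModule.of_forall_inf_ne_bot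
    (h : ∀ A B : Submodule R M, A ≠ ⊥ → B ≠ ⊥ → A ⊓ B ≠ ⊥) : IsC4StarModule R M := by
  intro P A B hAB f _
  suffices LinearMap.range f = ⊥ by rw [this]; exact isDirectSummand_bot
  have map_ne_bot (S : Submodule R P) : S ≠ ⊥ → S.map P.subtype ≠ ⊥ :=
    ((Submodule.map_injective_of_injective P.injective_subtype).ne_iff' (Submodule.map_bot _)).mpr
  have : A = ⊥ ∨ B = ⊥ := by
    by_contra! hne
    refine h _ _ (map_ne_bot A hne.1) (map_ne_bot B hne.2) ?_
    rw [← Submodule.map_inf _ P.injective_subtype, hAB.inf_eq_bot, Submodule.map_bot]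
  rcases this with rfl | rfl
  · exact LinearMap.range_eq_bot.mpr (Subsingleton.elim _ _)
  · exact Subsingleton.elim _ _

theorem IsC4StarModule.isDirectSummand_range (hM : IsC4StarModule R M) {P Q : Submodule R M}
    (hPQ : Disjoint P Q) (g : P →ₗ[R] Q) (hg : Function.Injective g) :
    IsDirectSummand (LinearMap.range g) := by
  let eP := Submodule.comapSubtypeEquivOfLe (le_sup_left : P ≤ P ⊔ Q)
  let eQ := Submodule.comapSubtypeEquivOfLe (le_sup_right : Q ≤ P ⊔ Q)
  have := hM (P ⊔ Q) _ _ (Submodule.isCompl_comap_subtype_sup hPQ)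
    (eQ.symm.toLinearMap ∘ₗ g ∘ₗ eP.toLinearMap) (by
      rw [LinearMap.ker_eq_bot.mpr (by simpa using hg)]; exact isDirectSummand_bot)
  rw [LinearMap.range_comp, LinearMap.range_comp, LinearEquiv.range, Submodule.map_top] at this
  exact (isDirectSummand_map_equiv_iff eQ.symm).mp this

end Module

section Domain
variable {R : Type*} [Ring R] [IsDomain R]

theorem eq_bot_or_eq_top_of_isDirectSummand {I : Submodule Rᵐᵒᵖ R} (hI : IsDirectSummand I) :
    I = ⊥ ∨ I = ⊤ := by
  obtain ⟨Q, hIQ⟩ := hI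
  set π := I.projectionOnto Q hIQ
  have hπ (x : R) : (π x : R) = π 1 * x := by
    simpa using congrArg Subtype.val (π.map_smul (op x) 1)
  have hπI {x : R} (hx : x ∈ I) : π 1 * x = x := by
    rw [← hπ]
    exact congrArg Subtype.val (Submodule.projectionOnto_apply_left hIQ ⟨x, hx⟩)
  rcases IsIdempotentElem.iff_eq_zero_or_one.mp (hπI (π 1).2) with h | h
  · refine .inl (eq_bot_iff.mpr fun x hx => ?_)
    rw [Submodule.mem_bot, ← hπI hx, h, zero_mul]
  · refine .inr (eq_top_iff.mpr fun x _ => ?_)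
    have := I.smul_mem (op x) (π 1).2
    rwa [h, op_smul_eq_mul, one_mul] at this

theorem not_isC4StarModule_op_of_forall_mul_eq_mul {a b : R} (ha : a ≠ 0) (hb : b ≠ 0)
    (hab : ∀ r s, a * r = b * s → a * r = 0) : ¬ IsC4StarModule Rᵐᵒᵖ R := by
  intro hR
  set P := LinearMap.range (LinearMap.mulLeft Rᵐᵒᵖ a)
  let eQ := LinearEquiv.ofInjective (LinearMap.mulLeft Rᵐᵒᵖ b) (mul_right_injective₀ hb)
  have hPQ : Disjoint P (LinearMap.range (LinearMap.mulLeft Rᵐᵒᵖ b)) := by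
    rw [Submodule.disjoint_def]
    rintro _ ⟨r, rfl⟩ ⟨s, hs⟩
    exact hab r s hs.symm
  have := hR.isDirectSummand_range hPQ (eQ.toLinearMap ∘ₗ P.subtype)
    (eQ.injective.comp P.injective_subtype)
  rw [LinearMap.range_comp, Submodule.range_subtype, isDirectSummand_map_equiv_iff] at this
  rcases eq_bot_or_eq_top_of_isDirectSummand this with h | h
  · exact ha ((Submodule.eq_bot_iff P).mp h a ⟨1, mul_one a⟩)
  · obtain ⟨r, hr⟩ : (1 : R) ∈ P := h ▸ Submodule.mem_top
    have har : a * r = 1 := hr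
    apply hb
    simpa [← mul_assoc, har] using hab (r * b) 1 (by rw [← mul_assoc, har, one_mul, mul_one])

theorem isC4StarModule_self_of_exists_mul_eq_mul
    (h : ∀ a b : R, a ≠ 0 → b ≠ 0 → ∃ r s, r ≠ 0 ∧ r * a = s * b) : IsC4StarModule R R :=
  IsC4StarModule.of_forall_inf_ne_bot fun A B hA hB => by
    obtain ⟨a, haA, ha⟩ := Submodule.exists_mem_ne_zero_of_ne_bot hA
    obtain ⟨b, hbB, hb⟩ := Submodule.exists_mem_ne_zero_of_ne_bot hB
    obtain ⟨r, s, hr, hrs⟩ := h a b ha hb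
    exact (Submodule.ne_bot_iff _).mpr
      ⟨r * a, ⟨A.smul_mem r haA, hrs ▸ B.smul_mem s hbB⟩, mul_ne_zero hr ha⟩

end Domain

namespace SkewPolynomial

section Semiring
variable {R : Type*} [Semiring R]

noncomputable def toPolynomial : SkewPolynomial R ≃ₗ[R] R[X] :=
  SkewMonoidAlgebra.coeffLinearEquiv ≪≫ₗ Finsupp.domLCongr Multiplicative.toAdd ≪≫ₗ
    (Polynomial.basisMonomials R).repr.symm

@[simp]
theorem coeff_toPolynomial (p : SkewPolynomial R) (n : ℕ) :
    (toPolynomial p).coeff n = p.coeff n := by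
  classical
  simpa [toPolynomial, SkewPolynomial.coeff, SkewMonoidAlgebra.coeffLinearEquiv,
    Finsupp.linearCombination_apply, Finsupp.sum, Polynomial.coeff_monomial] using fun h => h.symm

variable (R) in
noncomputable def degreeLT (m : ℕ) : Submodule R (SkewPolynomial R) :=
  (Polynomial.degreeLT R m).comap toPolynomial.toLinearMap

theorem mem_degreeLT {m : ℕ} {p : SkewPolynomial R} :
    p ∈ degreeLT R m ↔ ∀ n ≥ m, p.coeff n = 0 := by
  simp [degreeLT, Polynomial.mem_degreeLT, Polynomial.degree_lt_iff_coeff_zero]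

theorem mem_degreeLT_natDegree_add_one (p : SkewPolynomial R) :
    p ∈ degreeLT R ((toPolynomial p).natDegree + 1) :=
  mem_degreeLT.mpr fun n hn => by
    rw [← coeff_toPolynomial, Polynomial.coeff_eq_zero_of_natDegree_lt (by omega)]

variable (R) in
noncomputable def degreeLTEquiv (m : ℕ) : degreeLT R m ≃ₗ[R] (Fin m → R) :=
  LinearEquiv.ofSubmodules toPolynomial (degreeLT R m) (Polynomial.degreeLT R m)
      (Submodule.map_comap_eq_of_surjective toPolynomial.surjective _) ≪≫ₗ
    Polynomial.degreeLTEquiv R m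

instance (m : ℕ) : Module.Finite R (degreeLT R m) := .equiv (degreeLTEquiv R m).symm

end Semiring

section Action
variable {R : Type*} [Semiring R] [MulSemiringAction (Multiplicative ℕ) R]

theorem coeff_monomial_mul (k : ℕ) (a : R) (q : SkewPolynomial R) (n : ℕ) :
    (monomial k a * q).coeff n = if k ≤ n then a * φ^[k] (q.coeff (n - k)) else 0 := by
  induction q using SkewPolynomial.induction with
  | h0 => simp
  | ha j b q _ _ ih =>
    rw [mul_add, coeff_add, ih, monomial_mul_monomial, coeff_add, coeff_monomial, coeff_monomial]
    split_ifs <;> simp_all <;> omega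

theorem coeff_mul (p q : SkewPolynomial R) (n : ℕ) :
    (p * q).coeff n = ∑ i ∈ Finset.range (n + 1), p.coeff i * φ^[i] (q.coeff (n - i)) := by
  induction p using SkewPolynomial.induction with
  | h0 => simp
  | ha k a p _ _ ih =>
    simp only [add_mul, coeff_add, ih, Finset.sum_add_distrib, coeff_monomial_mul, coeff_monomial]
    congr 1
    split_ifs with h
    · rw [Finset.sum_eq_single k] <;> simp_all; omega
    · exact (Finset.sum_eq_zero fun i hi => by simp at hi; simp; omega).symm

theorem mul_mem_degreeLT {m e : ℕ} {p q : SkewPolynomial R} (hp : p ∈ degreeLT R m)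
    (hq : q ∈ degreeLT R (e + 1)) : p * q ∈ degreeLT R (m + e) := by
  rw [mem_degreeLT] at *
  intro n hn
  rw [coeff_mul]
  refine Finset.sum_eq_zero fun i _ => ?_
  rcases le_or_gt m i with h | h
  · rw [hp i h, zero_mul]
  · rw [hq (n - i) (by omega), iterate_map_zero, mul_zero]

end Action

section DivisionRing
variable {K : Type*} [DivisionRing K] [MulSemiringAction (Multiplicative ℕ) K]

theorem coeff_mul_natDegree_add_natDegree (p q : SkewPolynomial K) :
    (p * q).coeff ((toPolynomial p).natDegree + (toPolynomial q).natDegree) =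
      (toPolynomial p).leadingCoeff *
        φ^[(toPolynomial p).natDegree] (toPolynomial q).leadingCoeff := by
  set d := (toPolynomial p).natDegree
  set e := (toPolynomial q).natDegree
  rw [coeff_mul, Finset.sum_eq_single d]
  · rw [Nat.add_sub_cancel_left, Polynomial.leadingCoeff, Polynomial.leadingCoeff,
      coeff_toPolynomial, coeff_toPolynomial]
  · intro i _ hid
    rcases lt_or_gt_of_ne hid with h | h
    · rw [← coeff_toPolynomial q, Polynomial.coeff_eq_zero_of_natDegree_lt (by omega),
        iterate_map_zero, mul_zero]
    · rw [← coeff_toPolynomial p, Polynomial.coeff_eq_zero_of_natDegree_lt h, zero_mul]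
  · simp

instance : NoZeroDivisors (SkewPolynomial K) where
  eq_zero_or_eq_zero_of_mul_eq_zero {p q} h := by
    by_contra! hpq
    have hp : toPolynomial p ≠ 0 := by simpa using hpq.1
    have hq : toPolynomial q ≠ 0 := by simpa using hpq.2
    have := coeff_mul_natDegree_add_natDegree p q
    rw [h, coeff_zero] at this
    refine mul_ne_zero (Polynomial.leadingCoeff_ne_zero.mpr hp) ?_ this.symm
    exact (φ.injective.iterate _).ne_iff' (iterate_map_zero φ _) |>.mpr
      (Polynomial.leadingCoeff_ne_zero.mpr hq)

instance : IsDomain (SkewPolynomial K) := NoZeroDivisors.to_isDomain _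

theorem exists_ne_zero_mul_eq_mul {a b : SkewPolynomial K} (ha : a ≠ 0) (hb : b ≠ 0) :
    ∃ r s, r ≠ 0 ∧ r * a = s * b := by
  set d := (toPolynomial a).natDegree
  set e := (toPolynomial b).natDegree
  have finrank_map {m} {c : SkewPolynomial K} (hc : c ≠ 0) :
      Module.finrank K ((degreeLT K m).map (LinearMap.mulRight K c)) = m := by
    rw [← (Submodule.equivMapOfInjective _ (mul_left_injective₀ hc) _).finrank_eq,
      (degreeLTEquiv K m).finrank_eq, Module.finrank_fin_fun]
  set V := (degreeLT K (e + 1)).map (LinearMap.mulRight K a)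
  set W := (degreeLT K (d + 1)).map (LinearMap.mulRight K b)
  have hV : V ≤ degreeLT K (e + 1 + d) := Submodule.map_le_iff_le_comap.mpr fun r hr =>
    mul_mem_degreeLT hr (mem_degreeLT_natDegree_add_one a)
  have hW : W ≤ degreeLT K (e + 1 + d) := Submodule.map_le_iff_le_comap.mpr fun s hs => by
    rw [Submodule.mem_comap, show e + 1 + d = d + 1 + e by omega]
    exact mul_mem_degreeLT hs (mem_degreeLT_natDegree_add_one b)
  have hVW : Module.finrank K ↥(V ⊓ W) ≠ 0 := by
    have h₁ := Submodule.finrank_sup_add_finrank_inf_eq V W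
    have h₂ := Submodule.finrank_mono (sup_le hV hW)
    rw [finrank_map ha, finrank_map hb] at h₁
    rw [(degreeLTEquiv K _).finrank_eq, Module.finrank_fin_fun] at h₂
    omega
  obtain ⟨z, ⟨⟨r, -, rfl⟩, ⟨s, -, hs⟩⟩, hz⟩ :=
    Submodule.exists_mem_ne_zero_of_ne_bot (mt Submodule.finrank_eq_zero.mpr hVW)
  exact ⟨r, s, left_ne_zero_of_mul hz, hs.symm⟩

theorem X_mul_eq_zero_of_X_mul_eq_C_mul_X_mul {t : K} (ht : t ∉ Set.range φ)
    {r s : SkewPolynomial K} (h : X * r = C t * X * s) : X * r = 0 := by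
  have hcoeff (n : ℕ) : φ (r.coeff n) = t * φ (s.coeff n) := by
    simpa [← monomial_one_one_eq_X, C_mul_X_eq_monomial, coeff_monomial_mul] using
      congrArg (coeff · (n + 1)) h
  have hs : s = 0 := by
    ext n
    by_contra hn
    refine ht ⟨r.coeff n * (s.coeff n)⁻¹, ?_⟩
    rw [map_mul, map_inv₀, hcoeff, mul_assoc, mul_inv_cancel₀ (map_ne_zero φ |>.mpr hn), mul_one]
  rw [h, hs, mul_zero]


theorem isLeftC4StarRing : IsLeftC4StarRing (SkewPolynomial K) :=
  isC4StarModule_self_of_exists_mul_eq_mul fun _ _ => exists_ne_zero_mul_eq_mul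

theorem not_isRightC4StarRing {t : K} (ht : t ∉ Set.range φ) :
    ¬ IsRightC4StarRing (SkewPolynomial K) := by
  have ht0 : t ≠ 0 := by rintro rfl; exact ht ⟨0, map_zero φ⟩
  refine not_isC4StarModule_op_of_forall_mul_eq_mul X_ne_zero ?_
    fun r s => X_mul_eq_zero_of_X_mul_eq_C_mul_X_mul ht
  rwa [C_mul_X_eq_monomial, Ne, monomial_eq_zero_iff]

end DivisionRing
end SkewPolynomial

noncomputable instance : MulSemiringAction (Multiplicative ℕ) (RatFunc (ZMod 2)) :=
  MulSemiringAction.compHom _ (powersHom _ (frobenius (RatFunc (ZMod 2)) 2))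

theorem RatFunc.φ_eq_frobenius : SkewPolynomial.φ = frobenius (RatFunc (ZMod 2)) 2 := by
  ext x
  change powersHom _ (frobenius _ 2) (Multiplicative.ofAdd 1) x = _
  rw [powersHom_apply, toAdd_ofAdd, pow_one]

theorem RatFunc.X_notMem_range_φ :
    (RatFunc.X : RatFunc (ZMod 2)) ∉ Set.range SkewPolynomial.φ := by
  rintro ⟨f, hf⟩
  have hff : f * f = RatFunc.X := by rw [← hf, RatFunc.φ_eq_frobenius, frobenius_def, sq]
  have hf0 : f ≠ 0 := by rintro rfl; exact RatFunc.X_ne_zero (by simpa using hff.symm)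
  have := RatFunc.intDegree_mul hf0 hf0
  rw [hff, RatFunc.intDegree_X] at this
  omega

/-- There exists a ring which is left `C4*` but not right `C4*`. -/
theorem exists_left_not_right :
    ∃ (R : Type) (inst : Ring R),
      @IsLeftC4StarRing R inst ∧ ¬ @IsRightC4StarRing R inst :=
  ⟨SkewPolynomial (RatFunc (ZMod 2)), inferInstance, SkewPolynomial.isLeftC4StarRing,
    SkewPolynomial.not_isRightC4StarRing RatFunc.X_notMem_range_φ⟩
end

section
/- There exists a ring R such that the left regular module _RR is square-free (hence summand-square-free) but R is not a right C4*-ring. -/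
open MulOpposite

/-- The property required of the witness in STATEMENT 18: the left regular module `_RR` is
square-free (hence summand-square-free) but `R` is not a right `C4*`-ring. -/
def LeftSquareFreeNotRightC4Star (R : Type) [Ring R] : Prop :=
  IsSquareFreeModule R R ∧ IsSummandSquareFree R R ∧ ¬ IsRightC4StarRing R



section Witness
noncomputable section
open Finsupp
abbrev K : Type := RatFunc (ZMod 2)
instance : CharP K 2 :=
  charP_of_injective_algebraMap (R := ZMod 2) (A := K) (algebraMap (ZMod 2) K).injective 2

def sig : ℕ → (K →+* K)
  | 0 => RingHom.id K
  | n+1 => (frobenius K 2).comp (sig n)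

@[simp] lemma sig_zero (x : K) : sig 0 x = x := rfl

lemma sig_succ (n : ℕ) (x : K) : sig (n+1) x = (sig n x) ^ 2 := by
  show frobenius K 2 (sig n x) = _; rw [frobenius_def]

lemma sig_inj (n : ℕ) : Function.Injective (sig n) := (sig n).injective

lemma sig_add (m n : ℕ) (x : K) : sig (m + n) x = sig m (sig n x) := by
  induction m with
  | zero => simp
  | succ k ih => rw [Nat.succ_add, sig_succ, sig_succ, ih]

@[simp] lemma sig_eq_zero_iff (n : ℕ) (x : K) : sig n x = 0 ↔ x = 0 :=
  ⟨fun h => sig_inj n (by simpa using h), fun h => by simp [h]⟩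

-- the twisted multiplication
def tmul (f g : ℕ →₀ K) : ℕ →₀ K :=
  f.sum fun i a => g.sum fun j b => Finsupp.single (i + j) (a * sig i b)

lemma tmul_zero (f : ℕ →₀ K) : tmul f 0 = 0 := by simp [tmul]

lemma zero_tmul (f : ℕ →₀ K) : tmul 0 f = 0 := by simp [tmul]

lemma tmul_add (f g h : ℕ →₀ K) : tmul f (g + h) = tmul f g + tmul f h := by
  unfold tmul
  rw [← Finsupp.sum_add]
  refine Finsupp.sum_congr fun i hi => ?_
  rw [Finsupp.sum_add_index]
  · intro j _; simp
  · intro j _ b c; rw [map_add, mul_add, Finsupp.single_add]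

lemma add_tmul (f g h : ℕ →₀ K) : tmul (f + g) h = tmul f h + tmul g h := by
  unfold tmul
  rw [Finsupp.sum_add_index]
  · intro i _; simp
  · intro i _ a b
    rw [← Finsupp.sum_add]
    refine Finsupp.sum_congr fun j hj => ?_
    rw [add_mul, Finsupp.single_add]

lemma single_tmul_single (i j : ℕ) (a b : K) :
    tmul (Finsupp.single i a) (Finsupp.single j b) = Finsupp.single (i + j) (a * sig i b) := by
  unfold tmul
  rw [Finsupp.sum_single_index (by rw [Finsupp.sum_single_index] <;> simp),
    Finsupp.sum_single_index (by simp)]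

lemma single_tmul (i : ℕ) (a : K) (g : ℕ →₀ K) :
    tmul (Finsupp.single i a) g = g.sum fun j b => Finsupp.single (i + j) (a * sig i b) := by
  unfold tmul
  rw [Finsupp.sum_single_index]
  refine (Finsupp.sum_congr (g2 := fun _ _ => 0) fun j hj => ?_).trans Finset.sum_const_zero
  simp

lemma sss_assoc (i j k : ℕ) (a b c : K) :
    tmul (tmul (Finsupp.single i a) (Finsupp.single j b)) (Finsupp.single k c)
      = tmul (Finsupp.single i a) (tmul (Finsupp.single j b) (Finsupp.single k c)) := by
  rw [single_tmul_single, single_tmul_single, single_tmul_single, single_tmul_single,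
    add_assoc, mul_assoc, map_mul, ← sig_add]

lemma ss_assoc (i j : ℕ) (a b : K) (h : ℕ →₀ K) :
    tmul (tmul (Finsupp.single i a) (Finsupp.single j b)) h
      = tmul (Finsupp.single i a) (tmul (Finsupp.single j b) h) := by
  induction h using Finsupp.induction with
  | zero => simp [tmul_zero]
  | single_add k c h' _ _ ihh => rw [tmul_add, tmul_add, tmul_add, ihh, sss_assoc]

lemma s_assoc (i : ℕ) (a : K) (g h : ℕ →₀ K) :
    tmul (tmul (Finsupp.single i a) g) h = tmul (Finsupp.single i a) (tmul g h) := by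
  induction g using Finsupp.induction with
  | zero => simp [zero_tmul, tmul_zero]
  | single_add j b g' _ _ ihg => rw [tmul_add, add_tmul, add_tmul, tmul_add, ihg, ss_assoc]

lemma tmul_assoc (f g h : ℕ →₀ K) : tmul (tmul f g) h = tmul f (tmul g h) := by
  induction f using Finsupp.induction with
  | zero => simp [zero_tmul]
  | single_add i a f' _ _ ihf => rw [add_tmul, add_tmul, add_tmul, ihf, s_assoc]

lemma one_tmul (f : ℕ →₀ K) : tmul (Finsupp.single 0 1) f = f := by
  rw [single_tmul]; simpa using Finsupp.sum_single f

lemma tmul_one (f : ℕ →₀ K) : tmul f (Finsupp.single 0 1) = f := by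
  unfold tmul
  refine (Finsupp.sum_congr fun i hi => ?_).trans (Finsupp.sum_single f)
  rw [Finsupp.sum_single_index (by simp)]
  simp

/-- The twisted polynomial ring `K[x;σ]`. -/
def Rng : Type := ℕ →₀ K

def ofF : (ℕ →₀ K) → Rng := fun f => f
def toF : Rng → (ℕ →₀ K) := fun f => f

instance : AddCommGroup Rng := inferInstanceAs (AddCommGroup (ℕ →₀ K))
instance : Module K Rng := inferInstanceAs (Module K (ℕ →₀ K))

instance : Ring Rng :=
  { (inferInstance : AddCommGroup Rng) with
    mul := fun f g => ofF (tmul (toF f) (toF g))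
    one := ofF (Finsupp.single 0 1)
    mul_assoc := fun f g h => tmul_assoc (toF f) (toF g) (toF h)
    one_mul := fun f => one_tmul (toF f)
    mul_one := fun f => tmul_one (toF f)
    left_distrib := fun f g h => tmul_add (toF f) (toF g) (toF h)
    right_distrib := fun f g h => add_tmul (toF f) (toF g) (toF h)
    zero_mul := fun f => zero_tmul (toF f)
    mul_zero := fun f => tmul_zero (toF f) }

@[simp] lemma toF_mul (f g : Rng) : toF (f * g) = tmul (toF f) (toF g) := rfl
@[simp] lemma toF_one : toF 1 = Finsupp.single 0 1 := rfl
@[simp] lemma toF_zero : toF 0 = 0 := rfl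
@[simp] lemma toF_add (f g : Rng) : toF (f + g) = toF f + toF g := rfl
@[simp] lemma toF_neg (f : Rng) : toF (-f) = -toF f := rfl
@[simp] lemma toF_smul (c : K) (f : Rng) : toF (c • f) = c • toF f := rfl
@[simp] lemma toF_ofF (f : ℕ →₀ K) : toF (ofF f) = f := rfl
@[simp] lemma ofF_toF (f : Rng) : ofF (toF f) = f := rfl
lemma toF_inj : Function.Injective toF := fun _ _ h => h
@[simp] lemma toF_eq_zero (f : Rng) : toF f = 0 ↔ f = 0 := ⟨fun h => toF_inj h, fun h => by simp [h]⟩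

lemma tmul_apply (f g : ℕ →₀ K) (k : ℕ) :
    tmul f g k = ∑ i ∈ f.support, ∑ j ∈ g.support, if i + j = k then f i * sig i (g j) else 0 := by
  unfold tmul
  simp only [Finsupp.sum_apply, Finsupp.sum, Finset.sum_apply', Finsupp.single_apply]

lemma tmul_apply_eq_zero {f g : ℕ →₀ K} {k : ℕ}
    (h : ∀ i ∈ f.support, ∀ j ∈ g.support, i + j ≠ k) : tmul f g k = 0 := by
  rw [tmul_apply]
  refine Finset.sum_eq_zero fun i hi => Finset.sum_eq_zero fun j hj => ?_
  rw [if_neg (h i hi j hj)]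

lemma tmul_apply_top {f g : ℕ →₀ K} {m n : ℕ}
    (hm : ∀ i ∈ f.support, i ≤ m) (hn : ∀ j ∈ g.support, j ≤ n) :
    tmul f g (m + n) = f m * sig m (g n) := by
  rw [tmul_apply]
  rw [Finset.sum_eq_single m]
  · rw [Finset.sum_eq_single n]
    · simp
    · intro j hj hjn
      have := hn j hj
      rw [if_neg (by omega)]
    · intro hn'
      rw [Finsupp.notMem_support_iff] at hn'
      simp [hn']
  · intro i hi him
    refine Finset.sum_eq_zero fun j hj => ?_
    have := hm i hi
    have := hn j hj
    rw [if_neg (by omega)]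
  · intro hm'
    rw [Finsupp.notMem_support_iff] at hm'
    simp [hm']

lemma tmul_ne_zero {f g : ℕ →₀ K} (hf : f ≠ 0) (hg : g ≠ 0) : tmul f g ≠ 0 := by
  have hfs : f.support.Nonempty := Finsupp.support_nonempty_iff.2 hf
  have hgs : g.support.Nonempty := Finsupp.support_nonempty_iff.2 hg
  set m := f.support.max' hfs with hm
  set n := g.support.max' hgs with hn
  intro h0
  have : tmul f g (m + n) = 0 := by rw [h0]; rfl
  rw [tmul_apply_top (fun i hi => f.support.le_max' i hi) (fun j hj => g.support.le_max' j hj)]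
    at this
  have h1 : f m ≠ 0 := Finsupp.mem_support_iff.1 (f.support.max'_mem hfs)
  have h2 : g n ≠ 0 := Finsupp.mem_support_iff.1 (g.support.max'_mem hgs)
  rcases mul_eq_zero.1 this with h | h
  · exact h1 h
  · exact h2 ((sig_eq_zero_iff m (g n)).1 h)

lemma Rng_domain {f g : Rng} (hf : f ≠ 0) (hg : g ≠ 0) : f * g ≠ 0 := by
  intro h
  have h' : tmul (toF f) (toF g) = 0 := by rw [← toF_mul, h, toF_zero]
  exact tmul_ne_zero (fun h'' => hf (toF_inj h'')) (fun h'' => hg (toF_inj h'')) h'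

lemma single_one_tmul_apply_zero (c : K) (g : ℕ →₀ K) : tmul (Finsupp.single 1 c) g 0 = 0 := by
  refine tmul_apply_eq_zero fun i hi j hj => ?_
  have := Finsupp.support_single_subset hi
  simp only [Finset.mem_singleton] at this
  omega

lemma single_one_tmul_apply_succ (c : K) (g : ℕ →₀ K) (k : ℕ) :
    tmul (Finsupp.single 1 c) g (k + 1) = c * sig 1 (g k) := by
  rw [tmul_apply]
  rw [Finset.sum_subset Finsupp.support_single_subset (by
    intro i _ hi
    rw [Finsupp.notMem_support_iff] at hi
    refine Finset.sum_eq_zero fun j hj => ?_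
    simp [hi])]
  rw [Finset.sum_singleton, Finsupp.single_eq_same]
  have hiff : ∀ j : ℕ, (1 + j = k + 1) = (j = k) := fun j => by
    apply propext; omega
  simp only [hiff]
  rw [Finset.sum_ite_eq' g.support k (fun j => c * sig 1 (g j))]
  by_cases hk : k ∈ g.support
  · rw [if_pos hk]
  · rw [if_neg hk, Finsupp.notMem_support_iff.1 hk]
    simp

lemma single_zero_tmul (c : K) (f : ℕ →₀ K) : tmul (Finsupp.single 0 c) f = c • f := by
  rw [single_tmul]
  conv_rhs => rw [← Finsupp.sum_single f, Finsupp.smul_sum]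
  refine Finsupp.sum_congr fun j hj => ?_
  rw [Finsupp.smul_single, zero_add, sig_zero, smul_eq_mul]

lemma smul_tmul' (c : K) (f g : ℕ →₀ K) : tmul (c • f) g = c • tmul f g := by
  rw [← single_zero_tmul, s_assoc, single_zero_tmul]

def mulRightF (a : ℕ →₀ K) : (ℕ →₀ K) →ₗ[K] (ℕ →₀ K) where
  toFun f := tmul f a
  map_add' f g := add_tmul f g a
  map_smul' c f := smul_tmul' c f a

def iota (N : ℕ) : (Fin N → K) →ₗ[K] (ℕ →₀ K) :=
  ∑ i : Fin N, (Finsupp.lsingle (i : ℕ)).comp (LinearMap.proj i)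

lemma iota_apply (N : ℕ) (w : Fin N → K) :
    iota N w = ∑ i : Fin N, Finsupp.single (i : ℕ) (w i) := by
  simp [iota, LinearMap.sum_apply]

lemma iota_apply_coe (N : ℕ) (w : Fin N → K) (i : Fin N) : iota N w (i : ℕ) = w i := by
  rw [iota_apply]
  rw [Finset.sum_apply']
  rw [Finset.sum_eq_single i]
  · simp
  · intro j _ hj
    rw [Finsupp.single_apply, if_neg (by simpa [Fin.val_inj] using hj)]
  · intro h; exact absurd (Finset.mem_univ i) h

lemma iota_inj (N : ℕ) : Function.Injective (iota N) := by
  intro w w' h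
  funext i
  rw [← iota_apply_coe N w i, ← iota_apply_coe N w' i, h]

lemma iota_support (N : ℕ) (w : Fin N → K) : (iota N w).support ⊆ Finset.range N := by
  rw [iota_apply]
  refine (Finsupp.support_finset_sum).trans ?_
  intro k hk
  simp only [Finset.mem_biUnion] at hk
  obtain ⟨i, _, hk⟩ := hk
  have := Finsupp.support_single_subset hk
  simp only [Finset.mem_singleton] at this
  simp [this, i.isLt]

lemma exists_common_mul (a b : ℕ →₀ K) (ha : a ≠ 0) (hb : b ≠ 0) :
    ∃ u v : ℕ →₀ K, u ≠ 0 ∧ v ≠ 0 ∧ tmul u a + tmul v b = 0 := by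
  classical
  set D : ℕ := a.support.sup id + b.support.sup id + 1 with hD
  set N : ℕ := D + 1 with hN
  set M : ℕ := N + D with hM
  set L : ((Fin N → K) × (Fin N → K)) →ₗ[K] (ℕ →₀ K) :=
    (mulRightF a).comp ((iota N).comp (LinearMap.fst K _ _)) +
      (mulRightF b).comp ((iota N).comp (LinearMap.snd K _ _)) with hL
  set Θ : ((Fin N → K) × (Fin N → K)) →ₗ[K] (Fin M → K) :=
    LinearMap.pi (fun k : Fin M => (Finsupp.lapply (k : ℕ)).comp L) with hΘ
  have hni : ¬ Function.Injective Θ := by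
    intro hinj
    have hle := LinearMap.finrank_le_finrank_of_injective hinj
    rw [Module.finrank_prod, Module.finrank_pi, Module.finrank_pi, Fintype.card_fin,
      Fintype.card_fin] at hle
    omega
  rw [Function.not_injective_iff] at hni
  obtain ⟨w₁, w₂, hw, hne⟩ := hni
  set w := w₁ - w₂ with hw'
  have hΘw : Θ w = 0 := by rw [hw', map_sub, hw, sub_self]
  have hwne : w ≠ 0 := sub_ne_zero_of_ne hne
  have hsupp : ∀ (u : Fin N → K) (c : ℕ →₀ K), c.support.sup id < D →
      ∀ k, M ≤ k → tmul (iota N u) c k = 0 := by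
    intro u c hc k hk
    refine tmul_apply_eq_zero fun i hi j hj => ?_
    have h1 : i < N := Finset.mem_range.1 (iota_support N u hi)
    have h2 : (id j : ℕ) ≤ c.support.sup id := Finset.le_sup hj
    simp only [id] at h2
    omega
  have hLw0 : L w = 0 := by
    ext k
    by_cases hk : k < M
    · have h0 : Θ w ⟨k, hk⟩ = 0 := by rw [hΘw]; rfl
      simpa [hΘ] using h0
    · simp only [hL, LinearMap.add_apply, LinearMap.comp_apply, LinearMap.fst_apply,
        LinearMap.snd_apply, mulRightF, LinearMap.coe_mk, AddHom.coe_mk,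
        Finsupp.add_apply, Finsupp.coe_zero, Pi.zero_apply]
      rw [hsupp w.1 a (by rw [hD]; omega) k (by omega),
        hsupp w.2 b (by rw [hD]; omega) k (by omega), add_zero]
  have hw1 : w.1 ≠ 0 ∧ w.2 ≠ 0 := by
    constructor
    · intro h1
      have : tmul (iota N w.2) b = 0 := by
        have := hLw0
        simp only [hL, LinearMap.add_apply, LinearMap.comp_apply, LinearMap.fst_apply,
          LinearMap.snd_apply, mulRightF, LinearMap.coe_mk, AddHom.coe_mk, h1, map_zero,
          zero_tmul, zero_add] at this
        exact this
      have h2 : iota N w.2 = 0 := by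
        by_contra h2
        exact tmul_ne_zero h2 hb this
      exact hwne (Prod.ext h1 (iota_inj N (by simpa using h2)))
    · intro h1
      have : tmul (iota N w.1) a = 0 := by
        have := hLw0
        simp only [hL, LinearMap.add_apply, LinearMap.comp_apply, LinearMap.fst_apply,
          LinearMap.snd_apply, mulRightF, LinearMap.coe_mk, AddHom.coe_mk, h1, map_zero,
          tmul_zero, zero_tmul, add_zero] at this
        exact this
      have h2 : iota N w.1 = 0 := by
        by_contra h2
        exact tmul_ne_zero h2 ha this
      exact hwne (Prod.ext (iota_inj N (by simpa using h2)) h1)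
  refine ⟨iota N w.1, iota N w.2, ?_, ?_, ?_⟩
  · intro h; exact hw1.1 (iota_inj N (by simpa using h))
  · intro h; exact hw1.2 (iota_inj N (by simpa using h))
  · have := hLw0
    simp only [hL, LinearMap.add_apply, LinearMap.comp_apply, LinearMap.fst_apply,
      LinearMap.snd_apply, mulRightF, LinearMap.coe_mk, AddHom.coe_mk] at this
    exact this

lemma exists_common_mul_R (a b : Rng) (ha : a ≠ 0) (hb : b ≠ 0) :
    ∃ u v : Rng, u * a = v * b ∧ u * a ≠ 0 := by
  obtain ⟨u', v', hu, hv, h3⟩ := exists_common_mul (toF a) (toF b)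
    (fun h => ha (toF_inj h)) (fun h => hb (toF_inj h))
  refine ⟨ofF u', -(ofF v'), ?_, ?_⟩
  · have h4 : ofF u' * a + ofF v' * b = 0 := toF_inj (by
      simp only [toF_add, toF_mul, toF_ofF, toF_zero]
      exact h3)
    rw [neg_mul]
    exact eq_neg_of_add_eq_zero_left h4
  · exact Rng_domain (fun h => hu (by simpa using congrArg toF h)) ha

-- x and q
def xx : Rng := ofF (Finsupp.single 1 1)
def qq : Rng := ofF (Finsupp.single 1 (RatFunc.X : K))

lemma xx_ne_zero : xx ≠ 0 := by
  intro h
  have h1 := congrArg (fun f => toF f 1) h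
  simp only [xx, toF_ofF, toF_zero, Finsupp.single_eq_same, Finsupp.coe_zero,
    Pi.zero_apply] at h1
  exact one_ne_zero h1

lemma nonsquare (u : K) : u ^ 2 ≠ RatFunc.X := by
  intro h
  have hu : u ≠ 0 := by rintro rfl; exact RatFunc.X_ne_zero (by simpa using h.symm)
  have h2 : (u * u).intDegree = u.intDegree + u.intDegree := RatFunc.intDegree_mul hu hu
  rw [← sq, h, RatFunc.intDegree_X] at h2
  omega

lemma sig_one_eq_sq (u : K) : sig 1 u = u ^ 2 := by
  rw [show (1 : ℕ) = 0 + 1 from rfl, sig_succ, sig_zero]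

-- no left inverse trick: (x * c) coefficient 0 is 0
lemma xx_mul_ne_one (c : Rng) : xx * c ≠ 1 := by
  intro h
  have h0 := congrArg (fun f => toF f 0) h
  simp only [toF_mul, toF_one] at h0
  rw [show toF xx = Finsupp.single 1 1 from rfl] at h0
  rw [single_one_tmul_apply_zero] at h0
  simp at h0

-- Φ : Rng × Rng →ₗ[Rngᵐᵒᵖ] Rng
def Phi : (Rng × Rng) →ₗ[Rngᵐᵒᵖ] Rng where
  toFun p := xx * p.1 + qq * p.2
  map_add' p q := by
    simp only [Prod.fst_add, Prod.snd_add, mul_add]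
    abel
  map_smul' c p := by
    simp only [Prod.smul_fst, Prod.smul_snd, MulOpposite.smul_eq_mul_unop, RingHom.id_apply]
    rw [← mul_assoc, ← mul_assoc, add_mul]

lemma Phi_inj : Function.Injective Phi := by
  rw [injective_iff_map_eq_zero]
  intro p hp
  have hco : ∀ k : ℕ, sig 1 (toF p.1 k) + RatFunc.X * sig 1 (toF p.2 k) = 0 := by
    intro k
    have h0 := congrArg (fun f => toF f (k + 1)) hp
    simp only [Phi, LinearMap.coe_mk, AddHom.coe_mk, toF_add, toF_mul, toF_zero,
      Finsupp.add_apply, Finsupp.coe_zero, Pi.zero_apply] at h0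
    rw [show toF xx = Finsupp.single 1 1 from rfl, show toF qq = Finsupp.single 1 (RatFunc.X : K) from rfl,
      single_one_tmul_apply_succ, single_one_tmul_apply_succ, one_mul] at h0
    exact h0
  have hp2 : p.2 = 0 := by
    apply toF_inj
    ext k
    by_contra hk
    have h := hco k
    have hne : sig 1 (toF p.2 k) ≠ 0 := fun h0 =>
      hk (by simpa using (sig_eq_zero_iff 1 _).1 h0)
    rw [sig_one_eq_sq, sig_one_eq_sq] at h
    rw [sig_one_eq_sq] at hne
    have h2 : (2 : K) = 0 := by
      have := CharP.cast_eq_zero K 2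
      simpa using this
    have hX : RatFunc.X = ((toF p.1 k) / (toF p.2 k)) ^ 2 := by
      rw [div_pow, eq_div_iff hne]
      linear_combination h - (toF p.1 k) ^ 2 * h2
    exact nonsquare _ hX.symm
  have hp1 : p.1 = 0 := by
    apply toF_inj
    ext k
    have h := hco k
    rw [show toF p.2 = toF (0:Rng) from congrArg toF hp2, toF_zero] at h
    simp only [Finsupp.coe_zero, Pi.zero_apply, map_zero, mul_zero, add_zero] at h
    simpa using (sig_eq_zero_iff 1 _).1 h
  exact Prod.ext hp1 hp2



section Transfer
variable {S M M' : Type*} [Ring S] [AddCommGroup M] [AddCommGroup M'] [Module S M] [Module S M']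

lemma isCompl_map (e : M ≃ₗ[S] M') {A B : Submodule S M} (h : IsCompl A B) :
    IsCompl (A.map (e : M →ₗ[S] M')) (B.map (e : M →ₗ[S] M')) := by
  constructor
  · rw [_root_.disjoint_iff, ← Submodule.map_inf (e : M →ₗ[S] M') e.injective, _root_.disjoint_iff.1 h.1, Submodule.map_bot]
  · rw [codisjoint_iff, ← Submodule.map_sup, codisjoint_iff.1 h.2, Submodule.map_top,
      LinearEquiv.range]

lemma isDirectSummand_map (e : M ≃ₗ[S] M') {A : Submodule S M} (h : IsDirectSummand A) :
    IsDirectSummand (A.map (e : M →ₗ[S] M')) := by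
  obtain ⟨B, hB⟩ := h
  exact ⟨B.map (e : M →ₗ[S] M'), isCompl_map e hB⟩

lemma isDirectSummand_of_map (e : M ≃ₗ[S] M') {A : Submodule S M}
    (h : IsDirectSummand (A.map (e : M →ₗ[S] M'))) : IsDirectSummand A := by
  have h2 := isDirectSummand_map e.symm h
  have h3 : (A.map (e : M →ₗ[S] M')).map (e.symm : M' →ₗ[S] M) = A := by
    ext x
    simp [Submodule.mem_map_equiv]
  rwa [h3] at h2

lemma isC4Module_of_equiv (e : M ≃ₗ[S] M') (h : IsC4Module S M') : IsC4Module S M := by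
  intro A B hAB f hker
  set A' := A.map (e : M →ₗ[S] M') with hA'
  set B' := B.map (e : M →ₗ[S] M') with hB'
  set eA : A ≃ₗ[S] A' := e.submoduleMap A with heA
  set eB : B ≃ₗ[S] B' := e.submoduleMap B with heB
  set f' : A' →ₗ[S] B' := (eB : B →ₗ[S] B').comp (f.comp (eA.symm : A' →ₗ[S] A)) with hf'
  have hker' : LinearMap.ker f' = (LinearMap.ker f).map (eA : A →ₗ[S] A') := by
    ext y
    simp only [LinearMap.mem_ker, hf', LinearMap.comp_apply, Submodule.mem_map]
    constructor
    · intro hy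
      refine ⟨eA.symm y, ?_, by simp⟩
      have : f (eA.symm y) = 0 := by
        have := congrArg eB.symm hy
        simpa using this
      exact this
    · rintro ⟨x, hx, rfl⟩
      simp only [LinearEquiv.coe_coe, LinearEquiv.symm_apply_apply]
      rw [LinearMap.mem_ker.1 hx, map_zero]
  have hrange' : LinearMap.range f' = (LinearMap.range f).map (eB : B →ₗ[S] B') := by
    ext y
    simp only [LinearMap.mem_range, hf', LinearMap.comp_apply, Submodule.mem_map]
    constructor
    · rintro ⟨x, rfl⟩; exact ⟨f (eA.symm x), ⟨_, rfl⟩, rfl⟩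
    · rintro ⟨z, ⟨x, rfl⟩, rfl⟩; exact ⟨eA x, by simp⟩
  have := h A' B' (isCompl_map e hAB) f' (by rw [hker']; exact isDirectSummand_map eA hker)
  rw [hrange'] at this
  exact isDirectSummand_of_map eB this

end Transfer

lemma mem_fst' {x : Rng × Rng} : x ∈ Submodule.fst Rngᵐᵒᵖ Rng Rng ↔ x.2 = 0 := by
  simp [Submodule.fst, LinearMap.mem_ker]

lemma mem_snd' {x : Rng × Rng} : x ∈ Submodule.snd Rngᵐᵒᵖ Rng Rng ↔ x.1 = 0 := by
  simp [Submodule.snd, LinearMap.mem_ker]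

lemma tmul_single_one_apply_zero (f : ℕ →₀ K) (c : K) :
    tmul f (Finsupp.single 1 c) 0 = 0 := by
  refine tmul_apply_eq_zero fun i hi j hj => ?_
  have := Finsupp.support_single_subset hj
  simp only [Finset.mem_singleton] at this
  omega

lemma mul_xx_eq_xx {d : Rng} (h : d * xx = xx) : d = 1 := by
  have h1 : (d - 1) * xx = 0 := by rw [sub_mul, one_mul, h, sub_self]
  by_contra hd
  exact Rng_domain (fun h2 => hd (by rwa [sub_eq_zero] at h2)) xx_ne_zero h1

def ff : Submodule.fst Rngᵐᵒᵖ Rng Rng →ₗ[Rngᵐᵒᵖ] Submodule.snd Rngᵐᵒᵖ Rng Rng where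
  toFun p := ⟨(0, xx * p.1.1), mem_snd'.2 rfl⟩
  map_add' p q := by
    apply Subtype.ext
    simp only [Submodule.coe_add, Prod.fst_add, mul_add, Prod.mk_add_mk, add_zero]
  map_smul' c p := by
    apply Subtype.ext
    simp only [SetLike.val_smul, Prod.smul_fst, MulOpposite.smul_eq_mul_unop, RingHom.id_apply,
      Prod.smul_mk, mul_assoc, zero_mul]

lemma ff_ker : LinearMap.ker ff = ⊥ := by
  rw [eq_bot_iff]
  rintro ⟨⟨p1, p2⟩, hp⟩ hk
  rw [LinearMap.mem_ker] at hk
  have h1 : xx * p1 = 0 := by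
    have := congrArg (fun z : ↥(Submodule.snd Rngᵐᵒᵖ Rng Rng) => (z : Rng × Rng).2) hk
    simpa [ff] using this
  have hp1 : p1 = 0 := by
    by_contra h
    exact Rng_domain xx_ne_zero h h1
  have hp2 : p2 = 0 := mem_fst'.1 hp
  simp only [Submodule.mem_bot]
  apply Subtype.ext
  simp [hp1, hp2]

lemma notC4_prod : ¬ IsC4Module Rngᵐᵒᵖ (Rng × Rng) := by
  intro h
  have hAB : IsCompl (Submodule.fst Rngᵐᵒᵖ Rng Rng) (Submodule.snd Rngᵐᵒᵖ Rng Rng) :=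
    ⟨_root_.disjoint_iff.2 (Submodule.fst_inf_snd _ _ _),
      codisjoint_iff.2 (Submodule.fst_sup_snd _ _ _)⟩
  obtain ⟨C, hC⟩ := h _ _ hAB ff (by rw [ff_ker]; exact ⟨⊤, isCompl_bot_top⟩)
  set W := LinearMap.range ff with hW
  set pr : ↥(Submodule.snd Rngᵐᵒᵖ Rng Rng) →ₗ[Rngᵐᵒᵖ] ↥(Submodule.snd Rngᵐᵒᵖ Rng Rng) :=
    W.subtype.comp (W.linearProjOfIsCompl C hC) with hpr
  set b1 : ↥(Submodule.snd Rngᵐᵒᵖ Rng Rng) := ⟨(0, 1), mem_snd'.2 rfl⟩ with hb1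
  set bx : ↥(Submodule.snd Rngᵐᵒᵖ Rng Rng) := ⟨(0, xx), mem_snd'.2 rfl⟩ with hbx
  have hbxW : bx ∈ W := by
    refine ⟨⟨(1, 0), mem_fst'.2 rfl⟩, ?_⟩
    apply Subtype.ext
    simp [ff, bx, mul_one]
  have hmem : ((W.linearProjOfIsCompl C hC b1 : W) : ↥(Submodule.snd Rngᵐᵒᵖ Rng Rng)) ∈ W :=
    SetLike.coe_mem _
  obtain ⟨p, hp⟩ := LinearMap.mem_range.1 hmem
  set c : Rng := (p : Rng × Rng).1 with hc
  have hpr1 : (pr b1 : Rng × Rng) = (0, xx * c) := by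
    simp only [hpr, LinearMap.comp_apply, Submodule.coe_subtype, ← hp]
    rfl
  have hfix : pr bx = bx := by
    simp only [hpr, LinearMap.comp_apply, Submodule.coe_subtype]
    rw [show bx = ((⟨bx, hbxW⟩ : W) : ↥(Submodule.snd Rngᵐᵒᵖ Rng Rng)) from rfl,
      ]
    exact congrArg Subtype.val (Submodule.projectionOnto_apply_left hC ⟨bx, hbxW⟩)
  have hsm : bx = op xx • b1 := by
    apply Subtype.ext
    apply Prod.ext <;> simp [bx, b1, MulOpposite.smul_eq_mul_unop]
  have h1 := hfix
  rw [hsm, map_smul] at h1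
  have h2 := congrArg (fun z : ↥(Submodule.snd Rngᵐᵒᵖ Rng Rng) => (z : Rng × Rng)) h1
  simp only [SetLike.val_smul, hpr1] at h2
  have h3 := congrArg (fun z : Rng × Rng => z.2) h2
  simp only [hb1, Prod.smul_snd, MulOpposite.smul_eq_mul_unop, unop_op, one_mul] at h3
  exact xx_mul_ne_one c (mul_xx_eq_xx h3)




lemma Rng_uniform (A B : Submodule Rng Rng) (hA : A ≠ ⊥) (hB : B ≠ ⊥) : A ⊓ B ≠ ⊥ := by
  obtain ⟨a, haA, ha⟩ := (Submodule.ne_bot_iff A).1 hA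
  obtain ⟨b, hbB, hb⟩ := (Submodule.ne_bot_iff B).1 hB
  obtain ⟨u, v, huv, hne⟩ := exists_common_mul_R a b ha hb
  intro h0
  have h1 : u * a ∈ A := by
    have := A.smul_mem u haA
    rwa [smul_eq_mul] at this
  have h2 : u * a ∈ B := by
    have := B.smul_mem v hbB
    rw [smul_eq_mul] at this
    rwa [huv]
  have : u * a ∈ A ⊓ B := ⟨h1, h2⟩
  rw [h0, Submodule.mem_bot] at this
  exact hne this

lemma Rng_squareFree : IsSquareFreeModule Rng Rng := by
  intro A B hA hB hAB
  exact ⟨fun _ => Rng_uniform A B hA hB hAB⟩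

lemma Rng_summandSquareFree : IsSummandSquareFree Rng Rng :=
  fun A B _ _ hA hB hAB => Rng_squareFree A B hA hB hAB

lemma Rng_not_rightC4Star : ¬ IsRightC4StarRing Rng := by
  intro h
  have hN := h (LinearMap.range Phi)
  exact notC4_prod (isC4Module_of_equiv (LinearEquiv.ofInjective Phi Phi_inj) hN)
end
end Witness

/-- There exists a ring whose left regular module is square-free (hence
summand-square-free) but which is not a right `C4*`-ring. -/
theorem exists_leftSquareFree_not_rightC4Star :
    ∃ (R : Type) (inst : Ring R), @LeftSquareFreeNotRightC4Star R inst :=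
  ⟨Rng, inferInstance, Rng_squareFree, Rng_summandSquareFree, Rng_not_rightC4Star⟩
end
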